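/- arXiv:math/0611331 — 3 statements merged into one kernel-verified Lean document; each statement's English description precedes it below -/
import Mathlib

section
/- Let G be a group equipped with a proper left-invariant metric d_G (bounded sets are finite) and suppose G is locally finite. Then the following are equivalent: (a) dim_AN(G, d_G) = 0; (b) there is a constant c > 0 such that for every r > 0 the subgroup of G generated by the open ball B(1, r) is contained in B(1, c·r). -/
open Function SemidirectProduct ENNReal

noncomputable section

/-- Word length of `g` with respect to a symmetrized generating set `S`. -/
def wordLength {G : Type*} [Group G] (S : Set G) (g : G) : ℕ :=
  sInf {m | ∃ w : List G, w.length = m ∧ (∀ x ∈ w, x ∈ S ∨ x⁻¹ ∈ S) ∧ w.prod = g}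

/-- The word metric on a group. -/
def wordDist {G : Type*} [Group G] (S : Set G) (g h : G) : ℝ :=
  wordLength S (g⁻¹ * h)

/-- Growth function: the number of elements in the open ball `B(1,r)` of the word metric. -/
def growth {G : Type*} [Group G] (S : Set G) (r : ℝ) : ℕ :=
  Nat.card {g : G | (wordLength S g : ℝ) < r}

/-- `x` and `y` are in the same `r`-component of `A ⊆ X` (distance function `d`):
they are joined by an `r`-path inside `A`. -/
def ChainIn {X : Type*} (d : X → X → ℝ) (A : Set X) (r : ℝ) (x y : X) : Prop :=
  ∃ (m : ℕ) (c : Fin (m + 1) → X), (∀ i, c i ∈ A) ∧ c 0 = x ∧ c (Fin.last m) = y ∧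
    ∀ i : Fin m, d (c i.castSucc) (c i.succ) < r

/-- `D` is an `n`-dimensional control function for the distance function `d` on `X`:
for every `r > 0` there is a cover by `n+1` sets of Lebesgue number at least `r`
whose `r`-components have diameter at most `D r`. -/
def IsControlFunction {X : Type*} (d : X → X → ℝ) (n : ℕ) (D : ℝ → ℝ≥0∞) : Prop :=
  ∀ r : ℝ, 0 < r → ∃ P : Fin (n + 1) → Set X,
    (⋃ i, P i) = Set.univ ∧
    (∀ x : X, ∃ i, {y | d x y < r} ⊆ P i) ∧
    ∀ i, ∀ x ∈ P i, ∀ y ∈ P i, ChainIn d (P i) r x y → ENNReal.ofReal (d x y) ≤ D r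

/-- `dim_AN(X,d) ≤ n`: there is an `n`-dimensional control function which is a dilation. -/
def ANdimLE {X : Type*} (d : X → X → ℝ) (n : ℕ) : Prop :=
  ∃ C : ℝ, 0 < C ∧ IsControlFunction d n fun r => ENNReal.ofReal (C * r)

/-- `f` weakly dominates `g`. -/
def WeaklyDominates (f g : ℝ → ℝ) : Prop :=
  ∃ lam C : ℝ, 1 ≤ lam ∧ 0 ≤ C ∧ ∀ t : ℝ, 0 ≤ t → g t ≤ lam * f (lam * t + C) + C

/-- The base group of the restricted wreath product `H ≀ G`:
finitely supported functions `G → H` under pointwise multiplication. -/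
def WreathBase (H G : Type*) [Group H] [Group G] : Subgroup (G → H) where
  carrier := {f | (Function.mulSupport f).Finite}
  one_mem' := by simp [Function.mulSupport_one]
  mul_mem' {a b} ha hb := ((ha.union hb).subset (Function.mulSupport_mul a b))
  inv_mem' {a} ha := by simpa [Function.mulSupport_inv] using ha

variable (H G : Type*) [Group H] [Group G]

/-- The shift action of `b : G` on the base group, `(b • f) γ = f (b⁻¹ γ)`. -/
def wreathShift (b : G) : WreathBase H G ≃* WreathBase H G where
  toFun f := ⟨fun x => f.1 (b⁻¹ * x), by
    have h : Function.mulSupport (fun x => f.1 (b⁻¹ * x)) ⊆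
        (fun x : G => b⁻¹ * x) ⁻¹' Function.mulSupport f.1 := fun x hx => hx
    exact (f.2.preimage ((mul_right_injective b⁻¹).injOn)).subset h⟩
  invFun f := ⟨fun x => f.1 (b * x), by
    have h : Function.mulSupport (fun x => f.1 (b * x)) ⊆
        (fun x : G => b * x) ⁻¹' Function.mulSupport f.1 := fun x hx => hx
    exact (f.2.preimage ((mul_right_injective b).injOn)).subset h⟩
  left_inv f := by ext x; simp
  right_inv f := by ext x; simp
  map_mul' f g := rfl

/-- The action of `G` on the base group of the wreath product. -/
def wreathAct : G →* MulAut (WreathBase H G) where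
  toFun := wreathShift H G
  map_one' := by
    refine MulEquiv.ext fun f => Subtype.ext (funext fun x => ?_)
    simp [wreathShift]
  map_mul' a b := by
    refine MulEquiv.ext fun f => Subtype.ext (funext fun x => ?_)
    simp [wreathShift, mul_assoc]

/-- The restricted wreath product `H ≀ G`. -/
abbrev Wreath := WreathBase H G ⋊[wreathAct H G] G

/-- The element of the base group supported at `1` with value `a`. -/
def atOne (a : H) : WreathBase H G :=
  letI := Classical.decEq G
  ⟨fun x => if x = 1 then a else 1, Set.Finite.subset (Set.finite_singleton 1) (by
    intro x hx
    simp only [Function.mem_mulSupport] at hx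
    simp only [Set.mem_singleton_iff]
    by_contra h
    exact hx (if_neg h))⟩

/-- The `(g,a)`-bulb `g·a·g⁻¹` in `H ≀ G`. -/
def bulb (g : G) (a : H) : Wreath H G :=
  inr g * inl (atOne H G a) * (inr g)⁻¹

/-- The generating set `(H ∖ {1}) ∪ S` of `H ≀ G`. -/
def wreathGen (S : Set G) : Set (Wreath H G) :=
  {w | ∃ a : H, a ≠ 1 ∧ w = inl (atOne H G a)} ∪ {w | ∃ s ∈ S, w = inr s}

/-- The word metric on `H ≀ G` with respect to the generating set `(H ∖ {1}) ∪ S`. -/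
def wreathDist (S : Set G) (x y : Wreath H G) : ℝ :=
  wordLength (wreathGen H G S) (x⁻¹ * y)

/-- The metric on the kernel `K` of `H ≀ G → G` induced from the word metric on `H ≀ G`. -/
def kerDist (S : Set G) (x y : (rightHom : Wreath H G →* G).ker) : ℝ :=
  wreathDist H G S x.1 y.1


/- In dimension `0` the cover is the single set `univ`, so a linear control function just bounds
the diameter of the `r`-components of `G`. For a left-invariant metric the `r`-component of `x`
is the coset `x·⟨B(1,r)⟩`, hence both conditions say that `⟨B(1,r)⟩` has diameter `O(r)`. -/

theorem ANdimLE_zero_iff {X : Type*} (d : X → X → ℝ) :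
    ANdimLE d 0 ↔ ∃ C : ℝ, 0 < C ∧ ∀ r : ℝ, 0 < r → ∀ x y : X,
      ChainIn d Set.univ r x y → d x y ≤ C * r := by
  refine exists_congr fun C => and_congr_right fun hC => forall₂_congr fun r hr => ?_
  have hCr : 0 ≤ C * r := (mul_pos hC hr).le
  constructor
  · rintro ⟨P, hcover, -, hdiam⟩ x y hxy
    have hP : P 0 = Set.univ := (iSup_unique (ι := Fin 1) P).symm.trans hcover
    rw [← ENNReal.ofReal_le_ofReal_iff hCr]
    exact hdiam 0 x (hP ▸ trivial) y (hP ▸ trivial) (hP ▸ hxy)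
  · intro hbound
    refine ⟨fun _ => Set.univ, Set.iUnion_const _, fun _ => ⟨0, Set.subset_univ _⟩, ?_⟩
    exact fun _ x _ y _ hxy => ENNReal.ofReal_le_ofReal (hbound x y hxy)

theorem inv_mul_mem_ball_one_iff {G : Type*} [Group G] [PseudoMetricSpace G]
    (hinv : ∀ a x y : G, dist (a * x) (a * y) = dist x y) {r : ℝ} (x y : G) :
    x⁻¹ * y ∈ Metric.ball (1 : G) r ↔ dist x y < r := by
  rw [Metric.mem_ball, ← hinv x, mul_inv_cancel_left, mul_one, dist_comm]

theorem inv_mem_ball_one_iff {G : Type*} [Group G] [PseudoMetricSpace G]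
    (hinv : ∀ a x y : G, dist (a * x) (a * y) = dist x y) {r : ℝ} (s : G) :
    s⁻¹ ∈ Metric.ball (1 : G) r ↔ s ∈ Metric.ball (1 : G) r := by
  rw [← mul_one s⁻¹, inv_mul_mem_ball_one_iff hinv, ← Metric.mem_ball]

theorem chainIn_mul_list_prod {G : Type*} [Group G] [PseudoMetricSpace G]
    (hinv : ∀ a x y : G, dist (a * x) (a * y) = dist x y) {r : ℝ} (x : G) (l : List G)
    (hl : ∀ s ∈ l, s ∈ Metric.ball (1 : G) r) :
    ChainIn dist Set.univ r x (x * l.prod) := by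
  refine ⟨l.length, fun i => x * (l.take i).prod, fun _ => trivial, by simp, by simp, fun i => ?_⟩
  dsimp only
  rw [← inv_mul_mem_ball_one_iff hinv, Fin.val_castSucc, Fin.val_succ,
    List.prod_take_succ l i i.2, ← mul_assoc x, inv_mul_cancel_left]
  exact hl _ (List.getElem_mem i.2)

theorem chainIn_univ_iff_inv_mul_mem_closure {G : Type*} [Group G] [PseudoMetricSpace G]
    (hinv : ∀ a x y : G, dist (a * x) (a * y) = dist x y) {r : ℝ} (x y : G) :
    ChainIn dist Set.univ r x y ↔ x⁻¹ * y ∈ Subgroup.closure (Metric.ball (1 : G) r) := by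
  constructor
  · rintro ⟨m, c, -, rfl, rfl, hstep⟩
    refine Fin.induction (motive := fun i => (c 0)⁻¹ * c i ∈ _) (by simp) (fun i hi => ?_) _
    rw [← mul_inv_cancel_left (c i.castSucc) (c i.succ), ← mul_assoc]
    exact mul_mem hi (Subgroup.subset_closure ((inv_mul_mem_ball_one_iff hinv _ _).2 (hstep i)))
  · intro hxy
    rw [← Subgroup.mem_toSubmonoid, Subgroup.closure_toSubmonoid] at hxy
    obtain ⟨l, hl, hprod⟩ := Submonoid.exists_list_of_mem_closure hxy
    have hball : ∀ s ∈ l, s ∈ Metric.ball (1 : G) r := fun s hs =>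
      (hl s hs).elim id (inv_mem_ball_one_iff hinv s).1
    simpa [hprod] using chainIn_mul_list_prod hinv x l hball

theorem statement_0_general {G : Type*} [Group G] [MetricSpace G]
    (hinv : ∀ a x y : G, dist (a * x) (a * y) = dist x y) :
    ANdimLE (dist : G → G → ℝ) 0 ↔
      ∃ c : ℝ, 0 < c ∧ ∀ r : ℝ, 0 < r →
        ((Subgroup.closure (Metric.ball (1 : G) r) : Subgroup G) : Set G) ⊆
          Metric.ball (1 : G) (c * r) := by
  simp only [ANdimLE_zero_iff, chainIn_univ_iff_inv_mul_mem_closure hinv]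
  constructor
  · rintro ⟨C, hC, hbound⟩
    refine ⟨C + 1, by linarith, fun r hr g hg => ?_⟩
    have hg' : dist 1 g ≤ C * r := hbound r hr 1 g (by simpa using hg)
    rw [Metric.mem_ball, dist_comm]
    linarith
  · rintro ⟨c, hc, hsub⟩
    exact ⟨c, hc, fun r hr x y hxy =>
      ((inv_mul_mem_ball_one_iff hinv x y).1 (hsub r hr hxy)).le⟩

/-- For a locally finite group `G` with a proper left-invariant metric,
`dim_AN(G,d_G) = 0` iff there is `c > 0` such that for every `r > 0` the subgroup
generated by `B(1,r)` is contained in `B(1, c·r)`. -/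
theorem statement_0 {G : Type*} [Group G] [MetricSpace G]
    (hinv : ∀ a x y : G, dist (a * x) (a * y) = dist x y)
    (hproper : ∀ s : Set G, Bornology.IsBounded s → s.Finite)
    (hlocfin : ∀ F : Finset G, ((Subgroup.closure (F : Set G) : Subgroup G) : Set G).Finite) :
    ANdimLE (dist : G → G → ℝ) 0 ↔
      ∃ c : ℝ, 0 < c ∧ ∀ r : ℝ, 0 < r →
        ((Subgroup.closure (Metric.ball (1 : G) r) : Subgroup G) : Set G) ⊆
          Metric.ball (1 : G) (c * r) :=
  statement_0_general hinv

end
end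

section
/- Let X = {0,1,…,k}ⁿ be equipped with the l₁-metric and suppose X = X₁ ∪ … ∪ Xₙ is a cover such that the open ball of radius n+1 around every point of X is contained in some Xᵢ. Then for some index i, a 2-component of Xᵢ contains two points whose i-th coordinates differ by k. -/
open Function SemidirectProduct ENNReal

noncomputable section

variable (H G : Type*) [Group H] [Group G]

/-- The `l₁`-distance on the discrete cube `{0,1,…,k}ⁿ`. -/
def l1dist {n k : ℕ} (x y : Fin n → Fin (k + 1)) : ℝ :=
  ∑ i, |((x i : ℕ) : ℝ) - ((y i : ℕ) : ℝ)|

/-- Parity: a fixed-point-free involution on a finset gives even cardinality. -/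
lemma even_card_of_fpf_involution {α : Type*} [DecidableEq α] (f : α → α) :
    ∀ (s : Finset α), (∀ a ∈ s, f a ∈ s) → (∀ a ∈ s, f (f a) = a) → (∀ a ∈ s, f a ≠ a) →
    Even s.card := by
  intro s
  induction s using Finset.strongInduction with
  | _ s ih =>
    intro hmap hinv hne
    rcases s.eq_empty_or_nonempty with rfl | ⟨a, ha⟩
    · simp
    · have hfa : f a ∈ s := hmap a ha
      have hfane : f a ≠ a := hne a ha
      set t := (s.erase a).erase (f a) with ht
      have htsub : t ⊆ s := fun b hb => Finset.mem_of_mem_erase (Finset.mem_of_mem_erase hb)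
      have htss : t ⊂ s := Finset.ssubset_of_subset_of_ssubset
        (Finset.erase_subset _ _) (Finset.erase_ssubset ha)
      have hmem_t : ∀ b, b ∈ t ↔ b ∈ s ∧ b ≠ a ∧ b ≠ f a := by
        intro b
        simp only [ht, Finset.mem_erase]
        tauto
      have hmapt : ∀ b ∈ t, f b ∈ t := by
        intro b hb
        rcases (hmem_t b).1 hb with ⟨hbs, hba, hbfa⟩
        refine (hmem_t (f b)).2 ⟨hmap b hbs, ?_, ?_⟩
        · intro h
          have h2 := hinv b hbs
          rw [h] at h2
          exact hbfa h2.symm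
        · intro h
          have : f (f b) = f (f a) := by rw [h]
          rw [hinv b hbs, hinv a ha] at this
          exact hba this
      have hcard : s.card = t.card + 2 := by
        have h1 : (s.erase a).card = s.card - 1 := Finset.card_erase_of_mem ha
        have h2 : t.card = (s.erase a).card - 1 :=
          Finset.card_erase_of_mem (Finset.mem_erase.2 ⟨hfane, hfa⟩)
        have h3 : 1 ≤ s.card := Finset.card_pos.2 ⟨a, ha⟩
        have h4 : 2 ≤ s.card := by
          have : ({a, f a} : Finset α) ⊆ s := by
            intro b hb; simp at hb; rcases hb with rfl | rfl <;> assumption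
          calc 2 = ({a, f a} : Finset α).card := by
                  rw [Finset.card_insert_of_notMem (by simpa using fun h : a = f a => hfane h.symm),
                    Finset.card_singleton]
            _ ≤ s.card := Finset.card_le_card this
        omega
      have := ih t htss hmapt (fun b hb => hinv b (htsub hb)) (fun b hb => hne b (htsub hb))
      rw [hcard]
      rcases this with ⟨c, hc⟩
      exact ⟨c + 1, by omega⟩

section chain

variable {X : Type*} {d : X → X → ℝ} {A : Set X} {r : ℝ} {x y z : X}

lemma chainIn_refl (hx : x ∈ A) : ChainIn d A r x x :=
  ⟨0, fun _ => x, fun _ => hx, rfl, rfl, fun i => i.elim0⟩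

lemma chainIn_mem_left (h : ChainIn d A r x y) : x ∈ A := by
  obtain ⟨m, c, hmem, h0, _, _⟩ := h; rw [← h0]; exact hmem 0

lemma chainIn_mem_right (h : ChainIn d A r x y) : y ∈ A := by
  obtain ⟨m, c, hmem, _, hl, _⟩ := h; rw [← hl]; exact hmem _

lemma chainIn_snoc (h : ChainIn d A r x y) (hz : z ∈ A) (hd : d y z < r) :
    ChainIn d A r x z := by
  obtain ⟨m, c, hmem, h0, hl, hstep⟩ := h
  refine ⟨m + 1, Fin.snoc c z, ?_, ?_, ?_, ?_⟩
  · intro i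
    refine Fin.lastCases ?_ ?_ i
    · rw [Fin.snoc_last]; exact hz
    · intro t; rw [Fin.snoc_castSucc]; exact hmem t
  · rw [← Fin.castSucc_zero, Fin.snoc_castSucc]; exact h0
  · rw [Fin.snoc_last]
  · intro i
    refine Fin.lastCases ?_ ?_ i
    · rw [Fin.succ_last, Fin.snoc_last, Fin.snoc_castSucc, hl]; exact hd
    · intro t
      rw [Fin.succ_castSucc, Fin.snoc_castSucc, Fin.snoc_castSucc]
      exact hstep t

end chain

section chain2

variable {X : Type*} {d : X → X → ℝ} {A : Set X} {r : ℝ} {x y z : X}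

lemma chainIn_rtg (h : ChainIn d A r x y) :
    Relation.ReflTransGen (fun a b => a ∈ A ∧ b ∈ A ∧ d a b < r) x y := by
  obtain ⟨m, c, hmem, h0, hl, hstep⟩ := h
  have key : ∀ j : ℕ, ∀ hj : j ≤ m,
      Relation.ReflTransGen (fun a b => a ∈ A ∧ b ∈ A ∧ d a b < r) x (c ⟨j, by omega⟩) := by
    intro j
    induction j with
    | zero =>
      intro _
      have : (⟨0, by omega⟩ : Fin (m+1)) = 0 := rfl
      rw [this, h0]
    | succ j ihj =>
      intro hj
      refine Relation.ReflTransGen.tail (ihj (by omega)) ?_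
      have hs := hstep ⟨j, by omega⟩
      have e1 : (⟨j, by omega⟩ : Fin m).castSucc = ⟨j, by omega⟩ := rfl
      have e2 : (⟨j, by omega⟩ : Fin m).succ = ⟨j + 1, by omega⟩ := rfl
      rw [e1, e2] at hs
      exact ⟨hmem _, hmem _, hs⟩
  have := key m le_rfl
  have e : (⟨m, by omega⟩ : Fin (m+1)) = Fin.last m := rfl
  rw [e, hl] at this
  exact this

lemma rtg_chainIn (hx : x ∈ A)
    (h : Relation.ReflTransGen (fun a b => a ∈ A ∧ b ∈ A ∧ d a b < r) x y) :
    ChainIn d A r x y := by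
  induction h with
  | refl => exact chainIn_refl hx
  | tail _ hbc ih => exact chainIn_snoc ih hbc.2.1 hbc.2.2

lemma chainIn_trans (h1 : ChainIn d A r x y) (h2 : ChainIn d A r y z) :
    ChainIn d A r x z :=
  rtg_chainIn (chainIn_mem_left h1) ((chainIn_rtg h1).trans (chainIn_rtg h2))

lemma chainIn_symm (hsymm : ∀ a b, d a b = d b a) (h : ChainIn d A r x y) :
    ChainIn d A r y x := by
  refine rtg_chainIn (chainIn_mem_right h) ?_
  have hS : Symmetric (fun a b => a ∈ A ∧ b ∈ A ∧ d a b < r) := by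
    intro a b ⟨ha, hb, hab⟩
    exact ⟨hb, ha, by rwa [hsymm b a]⟩
  exact (@Relation.ReflTransGen.stdSymm _ _ ⟨fun a b h => hS h⟩).symm _ _ (chainIn_rtg h)

end chain2

section interp

variable {N k : ℕ}

lemma abs_nat_sub_le_one {a b : ℕ} (h1 : a ≤ b + 1) (h2 : b ≤ a + 1) :
    |((a : ℕ) : ℝ) - ((b : ℕ) : ℝ)| ≤ 1 := by
  rw [abs_le]
  have c1 : ((a : ℕ) : ℝ) ≤ ((b : ℕ) : ℝ) + 1 := by exact_mod_cast h1
  have c2 : ((b : ℕ) : ℝ) ≤ ((a : ℕ) : ℝ) + 1 := by exact_mod_cast h2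
  constructor <;> linarith

lemma l1dist_symm (p q : Fin (N+1) → Fin (k+1)) : l1dist p q = l1dist q p := by
  unfold l1dist
  exact Finset.sum_congr rfl fun i _ => abs_sub_comm _ _

lemma l1dist_self (p : Fin (N+1) → Fin (k+1)) : l1dist p p = 0 := by
  unfold l1dist; simp

lemma chain_interp {A : Set (Fin (N+1) → Fin (k+1))} (p q : Fin (N+1) → Fin (k+1))
    (hco : ∀ j, (p j : ℕ) ≤ q j + 1 ∧ (q j : ℕ) ≤ p j + 1)
    (hball : ∀ w, l1dist p w < (N : ℝ) + 1 + 1 → w ∈ A) :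
    ChainIn l1dist A 2 p q := by
  refine ⟨N + 1, fun t j => if (j : ℕ) < (t : ℕ) then q j else p j, ?_, ?_, ?_, ?_⟩
  · intro t
    apply hball
    have hle : l1dist p (fun j => if (j : ℕ) < (t : ℕ) then q j else p j) ≤ (N : ℝ) + 1 := by
      unfold l1dist
      calc ∑ i, |((p i : ℕ) : ℝ) - ((if (i : ℕ) < (t : ℕ) then q i else p i : Fin (k+1)) : ℕ)|
          ≤ ∑ _i : Fin (N+1), (1 : ℝ) := by
            refine Finset.sum_le_sum fun i _ => ?_
            by_cases h : (i : ℕ) < (t : ℕ)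
            · simp only [h, if_true]
              exact abs_nat_sub_le_one (hco i).1 (hco i).2
            · simp only [h, if_false, sub_self, abs_zero]; norm_num
        _ = (N : ℝ) + 1 := by simp
    linarith
  · funext j; simp
  · funext j
    simp [Fin.val_last, j.isLt]
  · intro t
    have key : l1dist (fun j => if (j : ℕ) < ((t.castSucc : Fin (N+2)) : ℕ) then q j else p j)
        (fun j => if (j : ℕ) < ((t.succ : Fin (N+2)) : ℕ) then q j else p j) ≤ 1 := by
      unfold l1dist
      rw [Fin.coe_castSucc, Fin.val_succ]
      have : ∀ i : Fin (N+1), i ≠ t →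
          |(((if (i : ℕ) < (t : ℕ) then q i else p i : Fin (k+1)) : ℕ) : ℝ) -
           (((if (i : ℕ) < (t : ℕ) + 1 then q i else p i : Fin (k+1)) : ℕ) : ℝ)| = 0 := by
        intro i hi
        have : ((i : ℕ) < (t : ℕ)) ↔ ((i : ℕ) < (t : ℕ) + 1) := by
          constructor
          · omega
          · intro h
            rcases Nat.lt_succ_iff_lt_or_eq.1 h with h' | h'
            · exact h'
            · exact absurd (Fin.ext h') hi
        rcases iff_iff_and_or_not_and_not.mp this with ⟨h1, h2⟩ | ⟨h1, h2⟩ <;>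
          simp [h1, h2]
      calc (∑ i : Fin (N+1), |(((if (i : ℕ) < (t : ℕ) then q i else p i : Fin (k+1)) : ℕ) : ℝ) -
           (((if (i : ℕ) < (t : ℕ) + 1 then q i else p i : Fin (k+1)) : ℕ) : ℝ)|)
          = |(((if (t : ℕ) < (t : ℕ) then q t else p t : Fin (k+1)) : ℕ) : ℝ) -
           (((if (t : ℕ) < (t : ℕ) + 1 then q t else p t : Fin (k+1)) : ℕ) : ℝ)| := by
            refine Finset.sum_eq_single t (fun i _ hi => this i hi)
              (fun h => absurd (Finset.mem_univ t) h)
        _ ≤ 1 := by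
            simp only [lt_irrefl, if_false, Nat.lt_succ_self, if_true]
            exact abs_nat_sub_le_one (hco t).1 (hco t).2
    calc l1dist _ _ ≤ 1 := key
      _ < 2 := by norm_num

end interp

section core

variable {N k : ℕ}

/-- The cyclic rotation `t ↦ t+1 mod (N+1)` on `Fin (N+1)`. -/
def cubeRot (N : ℕ) : Equiv.Perm (Fin (N+1)) where
  toFun t := ⟨((t : ℕ) + 1) % (N + 1), Nat.mod_lt _ (by omega)⟩
  invFun t := ⟨((t : ℕ) + N) % (N + 1), Nat.mod_lt _ (by omega)⟩
  left_inv t := by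
    ext
    show (((t : ℕ) + 1) % (N + 1) + N) % (N + 1) = (t : ℕ)
    have ht := t.isLt
    rcases Nat.lt_or_ge ((t : ℕ) + 1) (N + 1) with h | h
    · rw [Nat.mod_eq_of_lt h]
      have : (t : ℕ) + 1 + N = (t : ℕ) + (N + 1) := by omega
      rw [this, Nat.add_mod_right, Nat.mod_eq_of_lt ht]
    · have h2 : (t : ℕ) = N := by omega
      rw [h2]
      simp [Nat.mod_self]
  right_inv t := by
    ext
    show (((t : ℕ) + N) % (N + 1) + 1) % (N + 1) = (t : ℕ)
    have ht := t.isLt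
    rcases Nat.eq_zero_or_pos (t : ℕ) with h | h
    · rw [h, Nat.zero_add, Nat.mod_eq_of_lt (Nat.lt_succ_self N), Nat.mod_self]
    · have : (t : ℕ) + N = ((t : ℕ) - 1) + (N + 1) := by omega
      rw [this, Nat.add_mod_right]
      have h3 : ((t : ℕ) - 1) % (N + 1) = (t : ℕ) - 1 := Nat.mod_eq_of_lt (by omega)
      rw [h3]
      have h4 : (t : ℕ) - 1 + 1 = (t : ℕ) := by omega
      rw [h4, Nat.mod_eq_of_lt ht]

lemma cubeRot_apply (t : Fin (N+1)) :
    ((cubeRot N t : Fin (N+1)) : ℕ) = ((t : ℕ) + 1) % (N + 1) := rfl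

lemma cubeRot_symm_apply (t : Fin (N+1)) :
    (((cubeRot N).symm t : Fin (N+1)) : ℕ) = ((t : ℕ) + N) % (N + 1) := rfl

lemma cubeRot_symm_val (t : Fin (N+1)) :
    (((cubeRot N).symm t : Fin (N+1)) : ℕ) = if (t : ℕ) = 0 then N else (t : ℕ) - 1 := by
  rw [cubeRot_symm_apply]
  have ht := t.isLt
  by_cases h : (t : ℕ) = 0
  · rw [h, if_pos rfl, Nat.zero_add, Nat.mod_eq_of_lt (by omega)]
  · rw [if_neg h]
    have : (t : ℕ) + N = ((t : ℕ) - 1) + (N + 1) := by omega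
    rw [this, Nat.add_mod_right, Nat.mod_eq_of_lt (by omega)]

lemma cubeRot_last : cubeRot N (Fin.last N) = 0 := by
  ext
  show ((N : ℕ) + 1) % (N + 1) = 0
  simp

lemma cubeRot_symm_zero : (cubeRot N).symm 0 = Fin.last N := by
  ext
  rw [cubeRot_symm_val]
  simp

/-- Vertex `j` of the Kuhn simplex with base `y` and permutation `π`. -/
def cubeVert (y : Fin (N+1) → Fin (k+1)) (π : Equiv.Perm (Fin (N+1))) (j : ℕ) :
    Fin (N+1) → ℕ :=
  fun i => (y i : ℕ) + if ((π.symm i : ℕ) < j) then 1 else 0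

variable (lab : (Fin (N+1) → ℕ) → Fin (N+1) × Bool)

/-- Facet `j` (dropping vertex `j`) is a "door": labels of the other vertices are
all negative and pairwise distinct (hence exactly the target `{-e₁,…,-e_{N+1}}`). -/
def CubeDoor (y : Fin (N+1) → Fin (k+1)) (π : Equiv.Perm (Fin (N+1))) (j : ℕ) : Prop :=
  (∀ l, l ≤ N + 1 → l ≠ j → (lab (cubeVert y π l)).2 = false) ∧
  (∀ l l', l ≤ N + 1 → l' ≤ N + 1 → l ≠ j → l' ≠ j →
    (lab (cubeVert y π l)).1 = (lab (cubeVert y π l')).1 → l = l')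

lemma door_surj {y : Fin (N+1) → Fin (k+1)} {π : Equiv.Perm (Fin (N+1))} {j : ℕ}
    (hd : CubeDoor lab y π j) (hj : j ≤ N + 1) (q : Fin (N+1)) :
    ∃ l, l ≤ N + 1 ∧ l ≠ j ∧ (lab (cubeVert y π l)).1 = q := by
  classical
  set F : ℕ → Fin (N+1) := fun l => (lab (cubeVert y π l)).1 with hF
  set s : Finset ℕ := (Finset.range (N + 2)).erase j with hs
  have hcard : s.card = N + 1 := by
    rw [hs, Finset.card_erase_of_mem (by simp [Finset.mem_range]; omega), Finset.card_range]
    omega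
  have hinj : Set.InjOn F s := by
    intro l hl l' hl' h
    simp only [hs, Finset.mem_coe, Finset.mem_erase, Finset.mem_range] at hl hl'
    exact hd.2 l l' (by omega) (by omega) hl.1 hl'.1 h
  have himg : (s.image F).card = N + 1 := by
    rw [Finset.card_image_of_injOn hinj, hcard]
  have huniv : s.image F = Finset.univ := by
    apply Finset.eq_univ_of_card
    rw [himg, Fintype.card_fin]
  have hq : q ∈ s.image F := by rw [huniv]; exact Finset.mem_univ q
  rcases Finset.mem_image.mp hq with ⟨l, hl, hFl⟩
  simp only [hs, Finset.mem_erase, Finset.mem_range] at hl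
  exact ⟨l, by omega, hl.1, hFl⟩

lemma perm_mul_symm_apply (π τ : Equiv.Perm (Fin (N+1))) (i : Fin (N+1)) :
    (π * τ).symm i = τ.symm (π.symm i) := by
  rfl

end core

section core2

variable {N k : ℕ}

lemma cubeVert_shift (y : Fin (N+1) → Fin (k+1)) (π : Equiv.Perm (Fin (N+1)))
    (hb : (y (π 0) : ℕ) < k) (l : ℕ) (hl : l < N + 1) :
    cubeVert (Function.update y (π 0) ⟨(y (π 0) : ℕ) + 1, by omega⟩) (π * cubeRot N) l
      = cubeVert y π (l + 1) := by
  funext i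
  have hsymm : (π * cubeRot N).symm i = (cubeRot N).symm (π.symm i) :=
    perm_mul_symm_apply π (cubeRot N) i
  unfold cubeVert
  rw [hsymm, cubeRot_symm_val]
  by_cases h0 : ((π.symm i : Fin (N+1)) : ℕ) = 0
  · have hi : i = π 0 := by
      have : π.symm i = 0 := Fin.ext h0
      rw [← this, Equiv.apply_symm_apply]
    rw [if_pos h0, if_pos (show ((π.symm i : Fin (N+1)) : ℕ) < l + 1 by omega),
      if_neg (show ¬ (N < l) by omega), hi, Function.update_self]
  · have hi : i ≠ π 0 := by
      intro h
      apply h0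
      rw [h, Equiv.symm_apply_apply]
      rfl
    rw [if_neg h0, Function.update_of_ne hi]
    congr 1
    have : (((π.symm i : Fin (N+1)) : ℕ) - 1 < l) ↔ (((π.symm i : Fin (N+1)) : ℕ) < l + 1) := by
      omega
    by_cases h : ((π.symm i : Fin (N+1)) : ℕ) - 1 < l
    · rw [if_pos h, if_pos (this.1 h)]
    · rw [if_neg h, if_neg (fun hh => h (this.2 hh))]

lemma cubeVert_swap (y : Fin (N+1) → Fin (k+1)) (π : Equiv.Perm (Fin (N+1)))
    {j : ℕ} (h1 : 1 ≤ j) (hj : j < N + 1) (l : ℕ) (hl : l ≠ j) :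
    cubeVert y (π * Equiv.swap (⟨j - 1, by omega⟩ : Fin (N+1)) ⟨j, hj⟩) l = cubeVert y π l := by
  funext i
  set u : Fin (N+1) := ⟨j - 1, by omega⟩
  set v : Fin (N+1) := ⟨j, hj⟩
  have huv : u ≠ v := by
    intro h
    have := congrArg Fin.val h
    simp [u, v] at this
    omega
  have hu : ((u : Fin (N+1)) : ℕ) = j - 1 := rfl
  have hv : ((v : Fin (N+1)) : ℕ) = j := rfl
  have hsymm : (π * Equiv.swap u v).symm i = Equiv.swap u v (π.symm i) := by
    rw [perm_mul_symm_apply, Equiv.symm_swap]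
  unfold cubeVert
  rw [hsymm]
  congr 1
  set s := π.symm i
  by_cases hsu : s = u
  · rw [hsu, Equiv.swap_apply_left]
    by_cases h : j < l
    · rw [if_pos (by omega : ((v:Fin (N+1)):ℕ) < l), if_pos (by omega : ((u:Fin (N+1)):ℕ) < l)]
    · have hlj : l < j := by omega
      rw [if_neg (by omega : ¬ ((v:Fin (N+1)):ℕ) < l), if_neg (by omega : ¬ ((u:Fin (N+1)):ℕ) < l)]
  · by_cases hsv : s = v
    · rw [hsv, Equiv.swap_apply_right]
      by_cases h : j < l
      · rw [if_pos (by omega : ((u:Fin (N+1)):ℕ) < l), if_pos (by omega : ((v:Fin (N+1)):ℕ) < l)]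
      · have hlj : l < j := by omega
        rw [if_neg (by omega : ¬ ((u:Fin (N+1)):ℕ) < l), if_neg (by omega : ¬ ((v:Fin (N+1)):ℕ) < l)]
    · rw [Equiv.swap_apply_of_ne_of_ne hsu hsv]

variable (lab : (Fin (N+1) → ℕ) → Fin (N+1) × Bool)

/-- The ambient type of incidences: (base, permutation, dropped-vertex index). -/
abbrev CubeInc (N k : ℕ) :=
  (Fin (N+1) → Fin (k+1)) × Equiv.Perm (Fin (N+1)) × Fin (N+2)

/-- The pivot map: reflect an incidence across its facet. -/
noncomputable def cubePivot (a : CubeInc N k) : CubeInc N k :=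
  if hj0 : (a.2.2 : ℕ) = 0 then
    if hb : (a.1 (a.2.1 0) : ℕ) < k then
      (Function.update a.1 (a.2.1 0) ⟨(a.1 (a.2.1 0) : ℕ) + 1, by omega⟩,
        a.2.1 * cubeRot N, ⟨N + 1, by omega⟩)
    else a
  else if hjn : (a.2.2 : ℕ) = N + 1 then
    if hb : 1 ≤ (a.1 (a.2.1 (Fin.last N)) : ℕ) then
      (Function.update a.1 (a.2.1 (Fin.last N)) ⟨(a.1 (a.2.1 (Fin.last N)) : ℕ) - 1, by omega⟩,
        a.2.1 * (cubeRot N)⁻¹, 0)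
    else a
  else
    (a.1, a.2.1 * Equiv.swap (⟨(a.2.2 : ℕ) - 1, by omega⟩ : Fin (N+1))
      ⟨(a.2.2 : ℕ), by omega⟩, a.2.2)

/-- The within-simplex mate: drop the other vertex with the same label. -/
noncomputable def cubeMate (a : CubeInc N k) : CubeInc N k :=
  if h : ∃ l, l ≤ N + 1 ∧ l ≠ (a.2.2 : ℕ) ∧
      (lab (cubeVert a.1 a.2.1 l)).1 = (lab (cubeVert a.1 a.2.1 (a.2.2 : ℕ))).1 then
    (a.1, a.2.1, ⟨Classical.choose h, by
      have := (Classical.choose_spec h).1; omega⟩)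
  else a

end core2

section core3

variable {N k : ℕ} (lab : (Fin (N+1) → ℕ) → Fin (N+1) × Bool)

lemma cubeVert_between (y : Fin (N+1) → Fin (k+1)) (π : Equiv.Perm (Fin (N+1))) (l : ℕ)
    (i : Fin (N+1)) : (y i : ℕ) ≤ cubeVert y π l i ∧ cubeVert y π l i ≤ (y i : ℕ) + 1 := by
  unfold cubeVert; split <;> omega

lemma door_snd_false
    (H3 : ∀ (y x z : Fin (N+1) → ℕ), (∀ i, y i ≤ k) → (∀ i, y i ≤ x i ∧ x i ≤ y i + 1) →
      (∀ i, y i ≤ z i ∧ z i ≤ y i + 1) → ∀ i, ¬(lab x = (i, true) ∧ lab z = (i, false)))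
    {y : Fin (N+1) → Fin (k+1)} {π : Equiv.Perm (Fin (N+1))} {j : ℕ}
    (hd : CubeDoor lab y π j) (hj : j ≤ N + 1) :
    (lab (cubeVert y π j)).2 = false := by
  by_contra hT
  have hT' : (lab (cubeVert y π j)).2 = true := by
    cases h : (lab (cubeVert y π j)).2
    · exact absurd h hT
    · rfl
  obtain ⟨l, hl, hlj, hfst⟩ := door_surj lab hd hj ((lab (cubeVert y π j)).1)
  have hsnd := hd.1 l hl hlj
  have hzlab : lab (cubeVert y π l) = ((lab (cubeVert y π j)).1, false) :=
    Prod.ext_iff.mpr ⟨hfst, hsnd⟩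
  have hxlab : lab (cubeVert y π j) = ((lab (cubeVert y π j)).1, true) :=
    Prod.ext_iff.mpr ⟨rfl, hT'⟩
  exact H3 (fun i => (y i : ℕ)) (cubeVert y π j) (cubeVert y π l)
    (fun i => Fin.is_le (y i)) (fun i => cubeVert_between y π j i)
    (fun i => cubeVert_between y π l i) ((lab (cubeVert y π j)).1) ⟨hxlab, hzlab⟩

lemma door_top_bd_false
    (H1 : ∀ x i, lab x = (i, false) → 1 ≤ x i)
    {y : Fin (N+1) → Fin (k+1)} {π : Equiv.Perm (Fin (N+1))}
    (hd : CubeDoor lab y π (N+1)) (hb : (y (π (Fin.last N)) : ℕ) = 0) : False := by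
  obtain ⟨l, hl, hlj, hfst⟩ := door_surj lab hd le_rfl (π (Fin.last N))
  have hsnd := hd.1 l hl hlj
  have hlab : lab (cubeVert y π l) = (π (Fin.last N), false) := Prod.ext_iff.mpr ⟨hfst, hsnd⟩
  have h1 := H1 _ _ hlab
  have h2 : cubeVert y π l (π (Fin.last N)) = 0 := by
    unfold cubeVert
    rw [Equiv.symm_apply_apply]
    have : ¬ ((Fin.last N : Fin (N+1)) : ℕ) < l := by
      simp only [Fin.val_last]; omega
    rw [if_neg this, hb]
  omega

lemma door_shift {y : Fin (N+1) → Fin (k+1)} {π : Equiv.Perm (Fin (N+1))}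
    (hb : (y (π 0) : ℕ) < k) (hd : CubeDoor lab y π 0) :
    CubeDoor lab (Function.update y (π 0) ⟨(y (π 0) : ℕ) + 1, by omega⟩)
      (π * cubeRot N) (N + 1) := by
  have key := cubeVert_shift y π hb
  constructor
  · intro l hl hne
    rw [key l (by omega)]
    exact hd.1 (l + 1) (by omega) (by omega)
  · intro l l' h1 h2 h3 h4 heq
    rw [key l (by omega), key l' (by omega)] at heq
    have := hd.2 (l + 1) (l' + 1) (by omega) (by omega) (by omega) (by omega) heq
    omega

lemma door_unshift {y : Fin (N+1) → Fin (k+1)} {π : Equiv.Perm (Fin (N+1))}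
    (hb : 1 ≤ (y (π (Fin.last N)) : ℕ)) (hd : CubeDoor lab y π (N+1)) :
    CubeDoor lab
      (Function.update y (π (Fin.last N)) ⟨(y (π (Fin.last N)) : ℕ) - 1, by
        have := Fin.is_le (y (π (Fin.last N))); omega⟩)
      (π * (cubeRot N)⁻¹) 0 := by
  have hk1 : 1 ≤ k := by
    have := Fin.is_le (y (π (Fin.last N))); omega
  set a := π (Fin.last N) with ha
  set y'' : Fin (N+1) → Fin (k+1) :=
    Function.update y a ⟨(y a : ℕ) - 1, by have := Fin.is_le (y a); omega⟩ with hy''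
  set π'' : Equiv.Perm (Fin (N+1)) := π * (cubeRot N)⁻¹ with hπ''
  have hp0 : π'' 0 = a := by
    rw [hπ'', Equiv.Perm.mul_apply, ha]
    congr 1
    rw [Equiv.Perm.inv_def]
    exact cubeRot_symm_zero
  have hva : (y'' a : ℕ) = (y a : ℕ) - 1 := by rw [hy'', Function.update_self]
  have hb'' : (y'' (π'' 0) : ℕ) < k := by
    rw [hp0, hva]
    have := Fin.is_le (y a)
    omega
  have key := cubeVert_shift y'' π'' hb''
  simp only [hp0] at key
  have hupdate : Function.update y'' a
      ⟨(y'' a : ℕ) + 1, by have := Fin.is_le (y'' a); omega⟩ = y := by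
    funext i
    by_cases hi : i = a
    · rw [hi, Function.update_self]
      refine Fin.ext ?_
      show (y'' a : ℕ) + 1 = (y a : ℕ)
      rw [hva]; omega
    · rw [Function.update_of_ne hi, hy'', Function.update_of_ne hi]
  have hmul : π'' * cubeRot N = π := by rw [hπ'', inv_mul_cancel_right]
  simp only [hupdate, hmul] at key
  constructor
  · intro l hl hne
    have e : l - 1 + 1 = l := by omega
    rw [show cubeVert y'' π'' l = cubeVert y π (l-1) from by rw [key (l-1) (by omega), e]]
    exact hd.1 (l-1) (by omega) (by omega)
  · intro l l' h1 h2 h3 h4 heq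
    have e : l - 1 + 1 = l := by omega
    have e' : l' - 1 + 1 = l' := by omega
    rw [show cubeVert y'' π'' l = cubeVert y π (l-1) from by rw [key (l-1) (by omega), e],
        show cubeVert y'' π'' l' = cubeVert y π (l'-1) from by
          rw [key (l'-1) (by omega), e']] at heq
    have := hd.2 (l-1) (l'-1) (by omega) (by omega) (by omega) (by omega) heq
    omega

end core3

section core4

variable {N k : ℕ} (lab : (Fin (N+1) → ℕ) → Fin (N+1) × Bool)

lemma door_swap {y : Fin (N+1) → Fin (k+1)} {π : Equiv.Perm (Fin (N+1))} {j : ℕ}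
    (h1 : 1 ≤ j) (hj : j < N + 1) (hd : CubeDoor lab y π j) :
    CubeDoor lab y (π * Equiv.swap (⟨j - 1, by omega⟩ : Fin (N+1)) ⟨j, hj⟩) j := by
  constructor
  · intro l hl hne
    rw [cubeVert_swap y π h1 hj l hne]
    exact hd.1 l hl hne
  · intro l l' ha hb hc hdne heq
    rw [cubeVert_swap y π h1 hj l hc, cubeVert_swap y π h1 hj l' hdne] at heq
    exact hd.2 l l' ha hb hc hdne heq

lemma door_bd_corner
    (H4 : ∀ x : Fin (N+1) → ℕ, (∀ i', x i' ≤ k + 1) → ∀ i, x i = k + 1 →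
      (∀ i', x i' = k + 1 → i' ≤ i) → lab x = (i, false))
    {y : Fin (N+1) → Fin (k+1)} {π : Equiv.Perm (Fin (N+1))}
    (hd : CubeDoor lab y π 0) (hb : (y (π 0) : ℕ) = k) :
    (∀ i, (y i : ℕ) = k) ∧ π = 1 := by
  classical
  set M : ℕ → Finset (Fin (N+1)) :=
    fun l => Finset.univ.filter (fun i => (y i : ℕ) = k ∧ ((π.symm i : Fin (N+1)) : ℕ) ≤ l)
    with hM
  have hMne : ∀ l, (M l).Nonempty := by
    intro l
    refine ⟨π 0, ?_⟩
    simp only [hM, Finset.mem_filter, Finset.mem_univ, true_and]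
    exact ⟨hb, by rw [Equiv.symm_apply_apply]; exact Nat.zero_le l⟩
  have hvert : ∀ l (i : Fin (N+1)),
      cubeVert y π (l+1) i = k + 1 ↔ ((y i : ℕ) = k ∧ ((π.symm i : Fin (N+1)) : ℕ) ≤ l) := by
    intro l i
    have hyi := Fin.is_le (y i)
    unfold cubeVert
    constructor
    · intro h
      split at h
      · constructor <;> omega
      · omega
    · rintro ⟨h1, h2⟩
      rw [if_pos (by omega : ((π.symm i : Fin (N+1)) : ℕ) < l + 1)]
      omega
  have hmem_iff : ∀ l (i : Fin (N+1)),
      i ∈ M l ↔ ((y i : ℕ) = k ∧ ((π.symm i : Fin (N+1)) : ℕ) ≤ l) := by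
    intro l i
    simp [hM]
  have hlab : ∀ l, l < N + 1 →
      lab (cubeVert y π (l+1)) = ((M l).max' (hMne l), false) := by
    intro l hl
    refine H4 _ ?_ _ ?_ ?_
    · intro i'
      have := Fin.is_le (y i')
      unfold cubeVert
      split <;> omega
    · rw [hvert]
      exact (hmem_iff l _).1 ((M l).max'_mem (hMne l))
    · intro i' hi'
      exact Finset.le_max' _ _ ((hmem_iff l i').2 ((hvert l i').1 hi'))
  set g : ℕ → Fin (N+1) := fun l => (M l).max' (hMne l) with hg
  have hmono : ∀ l l', l ≤ l' → g l ≤ g l' := by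
    intro l l' h
    refine Finset.max'_subset _ ?_
    intro i hi
    rw [hmem_iff] at hi ⊢
    exact ⟨hi.1, le_trans hi.2 h⟩
  have hinj : ∀ l l', l < N + 1 → l' < N + 1 → g l = g l' → l = l' := by
    intro l l' hl hl' h
    have := hd.2 (l+1) (l'+1) (by omega) (by omega) (by omega) (by omega)
      (by rw [hlab l hl, hlab l' hl']; exact h)
    omega
  have hstrict : ∀ l l', l < l' → l' < N + 1 → (g l : ℕ) < (g l' : ℕ) := by
    intro l l' h hl'
    have h1 : g l ≤ g l' := hmono l l' (by omega)
    have h2 : g l ≠ g l' := fun he => by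
      have := hinj l l' (by omega) hl' he; omega
    have := lt_of_le_of_ne h1 h2
    exact this
  have hlow : ∀ l, l < N + 1 → l ≤ (g l : ℕ) := by
    intro l
    induction l with
    | zero => intro _; exact Nat.zero_le _
    | succ m ih =>
      intro h
      have h1 := hstrict m (m+1) (by omega) h
      have h2 := ih (by omega)
      omega
  have hup : ∀ d l, l + d = N → (g l : ℕ) ≤ l := by
    intro d
    induction d with
    | zero =>
      intro l h
      have := Fin.is_le (g l)
      omega
    | succ m ih =>
      intro l h
      have h2 := ih (l+1) (by omega)
      have h1 := hstrict l (l+1) (by omega) (by omega)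
      omega
  have hval : ∀ l, l < N + 1 → (g l : ℕ) = l := by
    intro l hl
    have := hup (N - l) l (by omega)
    have := hlow l hl
    omega
  have hmem : ∀ l (hl : l < N + 1), (⟨l, hl⟩ : Fin (N+1)) ∈ M l := by
    intro l hl
    have he : g l = ⟨l, hl⟩ := Fin.ext (hval l hl)
    rw [← he]
    exact (M l).max'_mem (hMne l)
  have hyk : ∀ i : Fin (N+1), (y i : ℕ) = k := by
    intro i
    have := (hmem_iff _ _).1 (hmem (i : ℕ) i.isLt)
    have he : (⟨(i : ℕ), i.isLt⟩ : Fin (N+1)) = i := Fin.ext rfl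
    rw [he] at this
    exact this.1
  refine ⟨hyk, ?_⟩
  have hsymle : ∀ l (hl : l < N + 1), ((π.symm ⟨l, hl⟩ : Fin (N+1)) : ℕ) ≤ l := by
    intro l hl
    exact ((hmem_iff _ _).1 (hmem l hl)).2
  have hsym : ∀ l, ∀ hl : l < N + 1, ((π.symm ⟨l, hl⟩ : Fin (N+1)) : ℕ) = l := by
    intro l
    induction l using Nat.strong_induction_on with
    | _ l ih =>
      intro hl
      by_contra hne
      have hle := hsymle l hl
      set r : ℕ := ((π.symm ⟨l, hl⟩ : Fin (N+1)) : ℕ) with hr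
      have hrl : r < l := by omega
      have h2 := ih r hrl (by omega)
      have e1 : π.symm ⟨l, hl⟩ = ⟨r, by omega⟩ := Fin.ext hr.symm
      have e2 : π.symm ⟨r, by omega⟩ = ⟨r, by omega⟩ := Fin.ext h2
      have := π.symm.injective (e1.trans e2.symm)
      have := congrArg Fin.val this
      simp at this
      omega
  refine Equiv.ext fun i => ?_
  have hl := (π i).isLt
  have := hsym ((π i) : ℕ) hl
  have he : (⟨((π i) : ℕ), hl⟩ : Fin (N+1)) = π i := Fin.ext rfl
  rw [he, Equiv.symm_apply_apply] at this
  exact Fin.ext this.symm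

/-- The unique boundary door: the corner simplex. -/
def cubeCorner (N k : ℕ) : CubeInc N k := (fun _ => ⟨k, Nat.lt_succ_self k⟩, 1, 0)

lemma corner_door
    (H4 : ∀ x : Fin (N+1) → ℕ, (∀ i', x i' ≤ k + 1) → ∀ i, x i = k + 1 →
      (∀ i', x i' = k + 1 → i' ≤ i) → lab x = (i, false)) :
    CubeDoor lab (fun _ => (⟨k, Nat.lt_succ_self k⟩ : Fin (k+1))) 1 0 := by
  have hv : ∀ (l : ℕ) (i : Fin (N+1)),
      cubeVert (fun _ => (⟨k, Nat.lt_succ_self k⟩ : Fin (k+1))) 1 l i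
        = k + if (i : ℕ) < l then 1 else 0 := by
    intro l i
    unfold cubeVert
    rfl
  have hlab : ∀ (l : ℕ) (_ : 1 ≤ l) (_ : l ≤ N + 1),
      lab (cubeVert (fun _ => (⟨k, Nat.lt_succ_self k⟩ : Fin (k+1))) 1 l)
        = (⟨l - 1, by omega⟩, false) := by
    intro l h1 h2
    refine H4 _ ?_ _ ?_ ?_
    · intro i'; rw [hv]; split <;> omega
    · rw [hv]
      rw [if_pos (by simp; omega : ((⟨l - 1, by omega⟩ : Fin (N+1)) : ℕ) < l)]
    · intro i' hi'
      rw [hv] at hi'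
      have : (i' : ℕ) < l := by
        by_contra hc
        rw [if_neg hc] at hi'
        omega
      show (i' : ℕ) ≤ l - 1
      omega
  constructor
  · intro l hl hne
    rw [hlab l (by omega) hl]
  · intro l l' h1 h2 h3 h4 heq
    rw [hlab l (by omega) h1, hlab l' (by omega) h2] at heq
    have := congrArg Fin.val heq
    simp at this
    omega

end core4

section core5

variable {N k : ℕ} (lab : (Fin (N+1) → ℕ) → Fin (N+1) × Bool)

lemma pivot_j0_int {y : Fin (N+1) → Fin (k+1)} {π : Equiv.Perm (Fin (N+1))} {j : Fin (N+2)}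
    (hj : (j : ℕ) = 0) (hb : (y (π 0) : ℕ) < k) :
    cubePivot (N := N) (k := k) (y, π, j) =
      (Function.update y (π 0) ⟨(y (π 0) : ℕ) + 1, by omega⟩, π * cubeRot N,
        ⟨N + 1, by omega⟩) := by
  unfold cubePivot
  rw [dif_pos hj, dif_pos hb]

lemma pivot_j0_bd {y : Fin (N+1) → Fin (k+1)} {π : Equiv.Perm (Fin (N+1))} {j : Fin (N+2)}
    (hj : (j : ℕ) = 0) (hb : ¬ ((y (π 0) : ℕ) < k)) :
    cubePivot (N := N) (k := k) (y, π, j) = (y, π, j) := by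
  unfold cubePivot
  rw [dif_pos hj, dif_neg hb]

lemma pivot_jn_int {y : Fin (N+1) → Fin (k+1)} {π : Equiv.Perm (Fin (N+1))} {j : Fin (N+2)}
    (hj : (j : ℕ) = N + 1) (hb : 1 ≤ (y (π (Fin.last N)) : ℕ)) :
    cubePivot (N := N) (k := k) (y, π, j) =
      (Function.update y (π (Fin.last N)) ⟨(y (π (Fin.last N)) : ℕ) - 1, by
        have := Fin.is_le (y (π (Fin.last N))); omega⟩, π * (cubeRot N)⁻¹, 0) := by
  unfold cubePivot
  rw [dif_neg (by omega : ¬ ((j : ℕ) = 0)), dif_pos hj, dif_pos hb]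

lemma pivot_jn_bd {y : Fin (N+1) → Fin (k+1)} {π : Equiv.Perm (Fin (N+1))} {j : Fin (N+2)}
    (hj : (j : ℕ) = N + 1) (hb : ¬ (1 ≤ (y (π (Fin.last N)) : ℕ))) :
    cubePivot (N := N) (k := k) (y, π, j) = (y, π, j) := by
  unfold cubePivot
  rw [dif_neg (by omega : ¬ ((j : ℕ) = 0)), dif_pos hj, dif_neg hb]

lemma pivot_mid {y : Fin (N+1) → Fin (k+1)} {π : Equiv.Perm (Fin (N+1))} {j : Fin (N+2)}
    (hj0 : ¬ ((j : ℕ) = 0)) (hjn : ¬ ((j : ℕ) = N + 1)) :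
    cubePivot (N := N) (k := k) (y, π, j) =
      (y, π * Equiv.swap (⟨(j : ℕ) - 1, by omega⟩ : Fin (N+1))
        ⟨(j : ℕ), by have := j.isLt; omega⟩, j) := by
  unfold cubePivot
  rw [dif_neg hj0, dif_neg hjn]

lemma pivot_pivot (a : CubeInc N k) : cubePivot (cubePivot a) = a := by
  obtain ⟨y, π, j⟩ := a
  by_cases hj0 : (j : ℕ) = 0
  · by_cases hb : (y (π 0) : ℕ) < k
    · rw [pivot_j0_int hj0 hb]
      have e1 : ((π * cubeRot N) (Fin.last N)) = π 0 := by
        rw [Equiv.Perm.mul_apply, cubeRot_last]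
      have e2 : (Function.update y (π 0) (⟨(y (π 0) : ℕ) + 1, by omega⟩ : Fin (k+1)))
          ((π * cubeRot N) (Fin.last N)) = ⟨(y (π 0) : ℕ) + 1, by omega⟩ := by
        rw [e1, Function.update_self]
      rw [pivot_jn_int (by simp) (by rw [e2]; simp)]
      refine Prod.ext_iff.mpr ⟨?_, Prod.ext_iff.mpr ⟨?_, ?_⟩⟩
      · show Function.update _ _ _ = y
        simp only [e1, e2]
        rw [Function.update_idem]
        have : (⟨((⟨(y (π 0) : ℕ) + 1, by omega⟩ : Fin (k+1)) : ℕ) - 1, by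
            have := Fin.is_le (y (π 0)); omega⟩ : Fin (k+1)) = y (π 0) := by
          refine Fin.ext ?_
          show (y (π 0) : ℕ) + 1 - 1 = (y (π 0) : ℕ)
          omega
        convert Function.update_eq_self (π 0) y using 2
        exact Fin.ext (by simp)
      · show (π * cubeRot N) * (cubeRot N)⁻¹ = π
        rw [mul_inv_cancel_right]
      · exact (Fin.ext hj0.symm : (0 : Fin (N+2)) = j)
    · rw [pivot_j0_bd hj0 hb, pivot_j0_bd hj0 hb]
  · by_cases hjn : (j : ℕ) = N + 1
    · by_cases hb : 1 ≤ (y (π (Fin.last N)) : ℕ)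
      · rw [pivot_jn_int hjn hb]
        have e1 : ((π * (cubeRot N)⁻¹) 0) = π (Fin.last N) := by
          rw [Equiv.Perm.mul_apply]
          congr 1
          rw [Equiv.Perm.inv_def]
          exact cubeRot_symm_zero
        have hk1 : 1 ≤ k := by have := Fin.is_le (y (π (Fin.last N))); omega
        have e2 : (Function.update y (π (Fin.last N))
            (⟨(y (π (Fin.last N)) : ℕ) - 1, by
              have := Fin.is_le (y (π (Fin.last N))); omega⟩ : Fin (k+1)))
            ((π * (cubeRot N)⁻¹) 0)
            = ⟨(y (π (Fin.last N)) : ℕ) - 1, by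
              have := Fin.is_le (y (π (Fin.last N))); omega⟩ := by
          rw [e1, Function.update_self]
        rw [pivot_j0_int rfl (by
          rw [e2]
          show (y (π (Fin.last N)) : ℕ) - 1 < k
          omega)]
        refine Prod.ext_iff.mpr ⟨?_, Prod.ext_iff.mpr ⟨?_, ?_⟩⟩
        · show Function.update _ _ _ = y
          simp only [e1, e2]
          rw [Function.update_idem]
          have : (⟨((⟨(y (π (Fin.last N)) : ℕ) - 1, by
              have := Fin.is_le (y (π (Fin.last N))); omega⟩ : Fin (k+1)) : ℕ) + 1, by
              show (y (π (Fin.last N)) : ℕ) - 1 + 1 < k + 1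
              have := Fin.is_le (y (π (Fin.last N))); omega⟩ : Fin (k+1))
              = y (π (Fin.last N)) := by
            refine Fin.ext ?_
            show (y (π (Fin.last N)) : ℕ) - 1 + 1 = (y (π (Fin.last N)) : ℕ)
            omega
          convert Function.update_eq_self (π (Fin.last N)) y using 2
          refine Fin.ext ?_
          simp
          omega
        · show (π * (cubeRot N)⁻¹) * cubeRot N = π
          rw [inv_mul_cancel_right]
        · exact (Fin.ext hjn.symm : (⟨N + 1, by omega⟩ : Fin (N+2)) = j)
      · rw [pivot_jn_bd hjn hb, pivot_jn_bd hjn hb]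
    · rw [pivot_mid hj0 hjn, pivot_mid hj0 hjn]
      refine Prod.ext_iff.mpr ⟨rfl, Prod.ext_iff.mpr ⟨?_, rfl⟩⟩
      show (π * Equiv.swap _ _) * Equiv.swap _ _ = π
      rw [mul_assoc, Equiv.swap_mul_self, mul_one]

end core5

section core6

variable {N k : ℕ} (lab : (Fin (N+1) → ℕ) → Fin (N+1) × Bool)

lemma pivot_door {a : CubeInc N k} (hd : CubeDoor lab a.1 a.2.1 (a.2.2 : ℕ)) :
    CubeDoor lab (cubePivot a).1 (cubePivot a).2.1 ((cubePivot a).2.2 : ℕ) := by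
  obtain ⟨y, π, j⟩ := a
  by_cases hj0 : (j : ℕ) = 0
  · by_cases hb : (y (π 0) : ℕ) < k
    · rw [pivot_j0_int hj0 hb]
      have hd0 : CubeDoor lab y π 0 := by rwa [hj0] at hd
      exact door_shift lab hb hd0
    · rw [pivot_j0_bd hj0 hb]; exact hd
  · by_cases hjn : (j : ℕ) = N + 1
    · by_cases hb : 1 ≤ (y (π (Fin.last N)) : ℕ)
      · rw [pivot_jn_int hjn hb]
        have hdn : CubeDoor lab y π (N + 1) := by rwa [hjn] at hd
        exact door_unshift lab hb hdn
      · rw [pivot_jn_bd hjn hb]; exact hd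
    · rw [pivot_mid hj0 hjn]
      exact door_swap lab (by omega) (by have := j.isLt; omega) hd

lemma corner_pivot : cubePivot (cubeCorner N k) = cubeCorner N k := by
  refine pivot_j0_bd rfl ?_
  show ¬ (k < k)
  omega

lemma pivot_ne
    (H1 : ∀ x i, lab x = (i, false) → 1 ≤ x i)
    (H4 : ∀ x : Fin (N+1) → ℕ, (∀ i', x i' ≤ k + 1) → ∀ i, x i = k + 1 →
      (∀ i', x i' = k + 1 → i' ≤ i) → lab x = (i, false))
    {a : CubeInc N k} (hd : CubeDoor lab a.1 a.2.1 (a.2.2 : ℕ))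
    (hc : a ≠ cubeCorner N k) : cubePivot a ≠ a := by
  obtain ⟨y, π, j⟩ := a
  by_cases hj0 : (j : ℕ) = 0
  · by_cases hb : (y (π 0) : ℕ) < k
    · rw [pivot_j0_int hj0 hb]
      intro he
      have := congrArg (fun t : CubeInc N k => (t.2.2 : ℕ)) he
      simp at this
      omega
    · exfalso
      have hbk : (y (π 0) : ℕ) = k := by
        have := Fin.is_le (y (π 0)); omega
      have hd0 : CubeDoor lab y π 0 := by rwa [hj0] at hd
      obtain ⟨hyk, hπ⟩ := door_bd_corner lab H4 hd0 hbk
      apply hc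
      refine Prod.ext_iff.mpr ⟨?_, Prod.ext_iff.mpr ⟨hπ, ?_⟩⟩
      · funext i; exact Fin.ext (hyk i)
      · exact Fin.ext hj0
  · by_cases hjn : (j : ℕ) = N + 1
    · by_cases hb : 1 ≤ (y (π (Fin.last N)) : ℕ)
      · rw [pivot_jn_int hjn hb]
        intro he
        have := congrArg (fun t : CubeInc N k => (t.2.2 : ℕ)) he
        simp at this
        omega
      · exfalso
        have hdn : CubeDoor lab y π (N + 1) := by rwa [hjn] at hd
        exact door_top_bd_false lab H1 hdn (by omega)
    · rw [pivot_mid hj0 hjn]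
      intro he
      have hp := congrArg (fun t : CubeInc N k => t.2.1) he
      simp only at hp
      have hswap : Equiv.swap (⟨(j : ℕ) - 1, by omega⟩ : Fin (N+1))
          ⟨(j : ℕ), by have := j.isLt; omega⟩ = 1 := by
        have := mul_left_cancel (hp.trans (mul_one π).symm)
        exact this
      have := congrArg (fun e : Equiv.Perm (Fin (N+1)) =>
        e (⟨(j : ℕ) - 1, by omega⟩ : Fin (N+1))) hswap
      simp only [Equiv.swap_apply_left, Equiv.Perm.one_apply] at this
      have := congrArg Fin.val this
      simp at this
      omega

lemma mate_eval
    (H3 : ∀ (y x z : Fin (N+1) → ℕ), (∀ i, y i ≤ k) → (∀ i, y i ≤ x i ∧ x i ≤ y i + 1) →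
      (∀ i, y i ≤ z i ∧ z i ≤ y i + 1) → ∀ i, ¬(lab x = (i, true) ∧ lab z = (i, false)))
    {y : Fin (N+1) → Fin (k+1)} {π : Equiv.Perm (Fin (N+1))} {j : Fin (N+2)}
    (hd : CubeDoor lab y π (j : ℕ)) :
    ∃ l : Fin (N+2), ((l : ℕ) ≠ (j : ℕ)) ∧
      ((lab (cubeVert y π (l : ℕ))).1 = (lab (cubeVert y π (j : ℕ))).1) ∧
      cubeMate lab (y, π, j) = (y, π, l) ∧ CubeDoor lab y π (l : ℕ) := by
  have hj : (j : ℕ) ≤ N + 1 := by have := j.isLt; omega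
  have hex : ∃ l, l ≤ N + 1 ∧ l ≠ ((y, π, j) : CubeInc N k).2.2.val ∧
      (lab (cubeVert ((y, π, j) : CubeInc N k).1 ((y, π, j) : CubeInc N k).2.1 l)).1 =
      (lab (cubeVert ((y, π, j) : CubeInc N k).1 ((y, π, j) : CubeInc N k).2.1
        (((y, π, j) : CubeInc N k).2.2 : ℕ))).1 :=
    door_surj lab hd hj ((lab (cubeVert y π (j : ℕ))).1)
  obtain ⟨hl, hlj, hfst⟩ := Classical.choose_spec hex
  refine ⟨⟨Classical.choose hex, by omega⟩, hlj, hfst, ?_, ?_⟩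
  · unfold cubeMate
    rw [dif_pos hex]
  · -- the facet at l is also a door
    set l := Classical.choose hex with hldef
    have hsnd : (lab (cubeVert y π (j : ℕ))).2 = false := door_snd_false lab H3 hd hj
    constructor
    · intro l' hl' hne
      by_cases hlj' : l' = (j : ℕ)
      · rw [hlj']; exact hsnd
      · exact hd.1 l' hl' hlj'
    · intro a b ha hb hna hnb heq
      by_cases haj : a = (j : ℕ)
      · by_cases hbj : b = (j : ℕ)
        · rw [haj, hbj]
        · exfalso
          have : b = l := hd.2 b l hb hl hbj hlj (by rw [← heq, haj, hfst])
          exact hnb this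
      · by_cases hbj : b = (j : ℕ)
        · exfalso
          have : a = l := hd.2 a l ha hl haj hlj (by rw [heq, hbj, hfst])
          exact hna this
        · exact hd.2 a b ha hb haj hbj heq

lemma cube_main
    (H1 : ∀ x i, lab x = (i, false) → 1 ≤ x i)
    (H3 : ∀ (y x z : Fin (N+1) → ℕ), (∀ i, y i ≤ k) → (∀ i, y i ≤ x i ∧ x i ≤ y i + 1) →
      (∀ i, y i ≤ z i ∧ z i ≤ y i + 1) → ∀ i, ¬(lab x = (i, true) ∧ lab z = (i, false)))
    (H4 : ∀ x : Fin (N+1) → ℕ, (∀ i', x i' ≤ k + 1) → ∀ i, x i = k + 1 →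
      (∀ i', x i' = k + 1 → i' ≤ i) → lab x = (i, false)) : False := by
  classical
  set I : Finset (CubeInc N k) :=
    Finset.univ.filter (fun a => CubeDoor lab a.1 a.2.1 (a.2.2 : ℕ)) with hI
  have hmemI : ∀ a : CubeInc N k, a ∈ I ↔ CubeDoor lab a.1 a.2.1 (a.2.2 : ℕ) := by
    intro a; simp [hI]
  -- the mate map is a fixed-point-free involution on I
  have hmapM : ∀ a ∈ I, cubeMate lab a ∈ I := by
    intro a ha
    obtain ⟨y, π, j⟩ := a
    obtain ⟨l, _, _, heq, hdl⟩ := mate_eval lab H3 ((hmemI _).1 ha)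
    rw [heq, hmemI]
    exact hdl
  have hinvM : ∀ a ∈ I, cubeMate lab (cubeMate lab a) = a := by
    intro a ha
    obtain ⟨y, π, j⟩ := a
    have hd := (hmemI _).1 ha
    obtain ⟨l, hlj, hfst, heq, hdl⟩ := mate_eval lab H3 hd
    rw [heq]
    obtain ⟨l₀, h0j, h0fst, heq0, _⟩ := mate_eval lab H3 hdl
    rw [heq0]
    have hjl : (j : ℕ) = (l₀ : ℕ) := by
      refine hdl.2 (j : ℕ) (l₀ : ℕ) (by have := j.isLt; omega) (by have := l₀.isLt; omega)
        (fun h => hlj h.symm) h0j ?_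
      rw [h0fst, hfst]
    exact Prod.ext_iff.mpr ⟨rfl, Prod.ext_iff.mpr ⟨rfl, Fin.ext hjl.symm⟩⟩
  have hneM : ∀ a ∈ I, cubeMate lab a ≠ a := by
    intro a ha
    obtain ⟨y, π, j⟩ := a
    obtain ⟨l, hlj, _, heq, _⟩ := mate_eval lab H3 ((hmemI _).1 ha)
    rw [heq]
    intro he
    exact hlj (congrArg (fun t : CubeInc N k => (t.2.2 : ℕ)) he)
  have evenI : Even I.card := even_card_of_fpf_involution _ I hmapM hinvM hneM
  -- corner
  have hcornerI : cubeCorner N k ∈ I := by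
    rw [hmemI]
    exact corner_door lab H4
  set s : Finset (CubeInc N k) := I.erase (cubeCorner N k) with hs
  have hmapP : ∀ a ∈ s, cubePivot a ∈ s := by
    intro a ha
    rw [hs, Finset.mem_erase] at ha ⊢
    obtain ⟨hane, haI⟩ := ha
    refine ⟨?_, (hmemI _).2 (pivot_door lab ((hmemI _).1 haI))⟩
    intro he
    apply hane
    have := congrArg cubePivot he
    rw [pivot_pivot, corner_pivot] at this
    exact this
  have hinvP : ∀ a ∈ s, cubePivot (cubePivot a) = a := fun a _ => pivot_pivot a
  have hneP : ∀ a ∈ s, cubePivot a ≠ a := by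
    intro a ha
    rw [hs, Finset.mem_erase] at ha
    exact pivot_ne lab H1 H4 ((hmemI _).1 ha.2) ha.1
  have evenS : Even s.card := even_card_of_fpf_involution _ s hmapP hinvP hneP
  have hcard : s.card = I.card - 1 := Finset.card_erase_of_mem hcornerI
  have hpos : 1 ≤ I.card := Finset.card_pos.2 ⟨_, hcornerI⟩
  obtain ⟨c1, hc1⟩ := evenI
  obtain ⟨c2, hc2⟩ := evenS
  omega

end core6

/-- If `X = {0,1,…,k}ⁿ` with the `l₁`-metric is covered by `X₁,…,Xₙ` so that
every open `(n+1)`-ball is contained in some `Xᵢ`, then for some `i` a `2`-component of `Xᵢ`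
contains two points whose `i`-th coordinates differ by `k`. -/
theorem statement_1 (n k : ℕ) (hn : 1 ≤ n)
    (P : Fin n → Set (Fin n → Fin (k + 1)))
    (hcover : (⋃ i, P i) = Set.univ)
    (hLebesgue : ∀ x : Fin n → Fin (k + 1), ∃ i, {y | l1dist x y < (n : ℝ) + 1} ⊆ P i) :
    ∃ (i : Fin n) (a b : Fin n → Fin (k + 1)),
      ChainIn l1dist (P i) 2 a b ∧ (((a i : ℕ) : ℤ) - ((b i : ℕ) : ℤ)).natAbs = k := by
  classical
  by_contra hcon
  push_neg at hcon
  obtain ⟨N, rfl⟩ : ∃ N, n = N + 1 := ⟨n - 1, by omega⟩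
  choose col hcol using hLebesgue
  have hself : ∀ x, x ∈ P (col x) := by
    intro x
    apply hcol x
    show l1dist x x < ((N + 1 : ℕ) : ℝ) + 1
    rw [l1dist_self]
    positivity
  rcases Nat.eq_zero_or_pos k with rfl | hk
  · -- k = 0 : trivial
    set x0 : Fin (N+1) → Fin (0+1) := fun _ => 0 with hx0
    exact (hcon (col x0) x0 x0 (chainIn_refl (hself x0))) (by simp)
  · set Reach : Fin (N+1) → (Fin (N+1) → Fin (k+1)) → Prop :=
      fun i x => x ∈ P i ∧ ∃ w, ChainIn l1dist (P i) 2 x w ∧ (w i : ℕ) = 0 with hReach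
    set toP : (x : Fin (N+1) → ℕ) → (∀ i, x i ≤ k) → (Fin (N+1) → Fin (k+1)) :=
      fun x h i => ⟨x i, by have := h i; omega⟩ with htoP
    set lab : (Fin (N+1) → ℕ) → Fin (N+1) × Bool := fun x =>
      if hx : ∀ i, x i ≤ k then
        (if Reach (col (toP x hx)) (toP x hx) then (col (toP x hx), true)
          else (col (toP x hx), false))
      else
        (((Finset.univ.filter (fun i => k < x i)).max' (by
          rw [Finset.filter_nonempty_iff]
          push_neg at hx
          obtain ⟨i, hi⟩ := hx
          exact ⟨i, Finset.mem_univ i, by omega⟩)), false)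
      with hlabdef
    have lab_grid : ∀ (x : Fin (N+1) → ℕ) (hx : ∀ i, x i ≤ k),
        lab x = (if Reach (col (toP x hx)) (toP x hx) then (col (toP x hx), true)
          else (col (toP x hx), false)) := by
      intro x hx
      rw [hlabdef]
      exact dif_pos hx
    have lab_high : ∀ (x : Fin (N+1) → ℕ) (hx : ¬ ∀ i, x i ≤ k),
        ∃ hne : (Finset.univ.filter (fun i => k < x i)).Nonempty,
        lab x = ((Finset.univ.filter (fun i => k < x i)).max' hne, false) := by
      intro x hx
      refine ⟨?_, ?_⟩
      · rw [Finset.filter_nonempty_iff]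
        push_neg at hx
        obtain ⟨i, hi⟩ := hx
        exact ⟨i, Finset.mem_univ i, by omega⟩
      · rw [hlabdef]
        exact dif_neg hx
    -- key step out of Reach at the k-face
    have reach_notk : ∀ (x : Fin (N+1) → ℕ) (hx : ∀ i, x i ≤ k) (i : Fin (N+1)),
        Reach i (toP x hx) → x i ≠ k := by
      intro x hx i hr hxi
      obtain ⟨hp, w, hw, hwi⟩ := hr
      apply hcon i (toP x hx) w hw
      have e1 : ((toP x hx i : ℕ) : ℤ) = (k : ℤ) := by
        show ((x i : ℕ) : ℤ) = (k : ℤ)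
        exact_mod_cast hxi
      rw [e1, hwi]
      simp
    -- H1
    have H1 : ∀ x i, lab x = (i, false) → 1 ≤ x i := by
      intro x i h
      by_cases hx : ∀ i', x i' ≤ k
      · rw [lab_grid x hx] at h
        by_cases hr : Reach (col (toP x hx)) (toP x hx)
        · rw [if_pos hr] at h
          exact absurd (Prod.ext_iff.mp h).2 (by simp)
        · rw [if_neg hr] at h
          have hi : col (toP x hx) = i := (Prod.ext_iff.mp h).1
          by_contra h0
          apply hr
          refine ⟨hself _, toP x hx, chainIn_refl (hself _), ?_⟩
          show x (col (toP x hx)) = 0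
          rw [hi]; omega
      · obtain ⟨hne, hh⟩ := lab_high x hx
        rw [hh] at h
        have hi : (Finset.univ.filter (fun i => k < x i)).max' hne = i :=
          (Prod.ext_iff.mp h).1
        have := (Finset.univ.filter (fun i => k < x i)).max'_mem hne
        rw [hi] at this
        simp only [Finset.mem_filter] at this
        omega
    -- H4
    have H4 : ∀ x : Fin (N+1) → ℕ, (∀ i', x i' ≤ k + 1) → ∀ i, x i = k + 1 →
        (∀ i', x i' = k + 1 → i' ≤ i) → lab x = (i, false) := by
      intro x hb i hxi hmax
      have hx : ¬ ∀ i', x i' ≤ k := by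
        push_neg
        exact ⟨i, by omega⟩
      obtain ⟨hne, hh⟩ := lab_high x hx
      rw [hh]
      have : (Finset.univ.filter (fun i => k < x i)).max' hne = i := by
        refine le_antisymm ?_ ?_
        · refine Finset.max'_le _ _ _ ?_
          intro b hbmem
          simp only [Finset.mem_filter] at hbmem
          have := hb b
          exact hmax b (by omega)
        · refine Finset.le_max' _ _ ?_
          simp only [Finset.mem_filter]
          exact ⟨Finset.mem_univ i, by omega⟩
      rw [this]
    -- H3
    have H3 : ∀ (y x z : Fin (N+1) → ℕ), (∀ i, y i ≤ k) → (∀ i, y i ≤ x i ∧ x i ≤ y i + 1) →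
        (∀ i, y i ≤ z i ∧ z i ≤ y i + 1) → ∀ i, ¬(lab x = (i, true) ∧ lab z = (i, false)) := by
      rintro y x z hy hx hz i ⟨hxl, hzl⟩
      have hxg : ∀ i', x i' ≤ k := by
        by_contra hxg
        obtain ⟨hne, hh⟩ := lab_high x hxg
        rw [hh] at hxl
        exact absurd (Prod.ext_iff.mp hxl).2 (by simp)
      have hr : Reach (col (toP x hxg)) (toP x hxg) := by
        by_contra hr
        rw [lab_grid x hxg, if_neg hr] at hxl
        exact absurd (Prod.ext_iff.mp hxl).2 (by simp)
      have hi : col (toP x hxg) = i := by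
        rw [lab_grid x hxg, if_pos hr] at hxl
        exact (Prod.ext_iff.mp hxl).1
      have hxik : x i ≠ k := reach_notk x hxg i (hi ▸ hr)
      by_cases hzg : ∀ i', z i' ≤ k
      · -- z is a grid point in the same cell
        have hrz : ¬ Reach (col (toP z hzg)) (toP z hzg) := by
          intro hrz
          rw [lab_grid z hzg, if_pos hrz] at hzl
          exact absurd (Prod.ext_iff.mp hzl).2 (by simp)
        have hiz : col (toP z hzg) = i := by
          rw [lab_grid z hzg, if_neg hrz] at hzl
          exact (Prod.ext_iff.mp hzl).1
        apply hrz
        rw [hiz]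
        set p := toP x hxg with hp
        set q := toP z hzg with hq
        have hco : ∀ j, (p j : ℕ) ≤ (q j : ℕ) + 1 ∧ (q j : ℕ) ≤ (p j : ℕ) + 1 := by
          intro j
          have h1 := hx j
          have h2 := hz j
          constructor
          · show x j ≤ z j + 1
            omega
          · show z j ≤ x j + 1
            omega
        have hchain : ChainIn l1dist (P i) 2 p q := by
          refine chain_interp p q hco ?_
          intro w hw
          have : l1dist p w < ((N + 1 : ℕ) : ℝ) + 1 := by
            push_cast at hw ⊢
            linarith
          have := hcol p this
          rwa [hi] at this
        obtain ⟨hpmem, w, hw, hwi⟩ := hi ▸ hr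
        refine ⟨chainIn_mem_right hchain, w,
          chainIn_trans (chainIn_symm (fun a b => l1dist_symm a b) hchain) hw, hwi⟩
      · -- z is an overflow point
        obtain ⟨hne, hh⟩ := lab_high z hzg
        rw [hh] at hzl
        have hiz : (Finset.univ.filter (fun i => k < z i)).max' hne = i :=
          (Prod.ext_iff.mp hzl).1
        have hzi : k < z i := by
          have := (Finset.univ.filter (fun i => k < z i)).max'_mem hne
          rw [hiz] at this
          simp only [Finset.mem_filter] at this
          exact this.2
        have h1 := hx i
        have h2 := hz i
        have h3 := hy i
        have h4 := hxg i
        omega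
    exact cube_main lab H1 H3 H4

end
end

section
/- Let X be a metric space with an (n-1)-dimensional control function D : ℝ₊ → ℝ₊ ∪ {∞}. Then for every r-cube f : {0,1,…,k}ⁿ → X there exist two points a and b in {0,1,…,k}ⁿ whose i-th coordinates differ by k for some index i, and such that dist(f(a), f(b)) ≤ D(n·r). -/
open Function SemidirectProduct ENNReal

noncomputable section

variable (H G : Type*) [Group H] [Group G]

/-- An `r`-cube in `X` (with distance function `dX`): a map `f : {0,1,…,k}ⁿ → X` moving
adjacent lattice points less than `r` apart. -/
def IsRCube {X : Type*} (dX : X → X → ℝ) {n k : ℕ} (r : ℝ)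
    (f : (Fin n → Fin (k + 1)) → X) : Prop :=
  ∀ (x : Fin n → Fin (k + 1)) (i : Fin n) (h : (x i : ℕ) < k),
    dX (f x) (f (Function.update x i ⟨(x i : ℕ) + 1, Nat.succ_lt_succ h⟩)) < r

namespace St2Aux

open Finset Function

variable {m k : ℕ}

/-- Vertex `j` of the Freudenthal simplex with base `v` and order `σ`. -/
def vtx (v : Fin (m+1) → Fin (k+1)) (σ : Equiv.Perm (Fin (m+1))) (j : Fin (m+2)) :
    Fin (m+1) → ℕ :=
  fun i => (v i : ℕ) + if ((σ.symm i : ℕ) < (j : ℕ)) then 1 else 0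

lemma vtx_le (v : Fin (m+1) → Fin (k+1)) (σ : Equiv.Perm (Fin (m+1))) (j : Fin (m+2))
    (i : Fin (m+1)) : vtx v σ j i ≤ k + 1 := by
  have := (v i).isLt
  unfold vtx; split <;> omega

lemma vtx_mono (v : Fin (m+1) → Fin (k+1)) (σ : Equiv.Perm (Fin (m+1))) {j j' : Fin (m+2)}
    (h : (j : ℕ) ≤ (j' : ℕ)) (i : Fin (m+1)) :
    vtx v σ j i ≤ vtx v σ j' i ∧ vtx v σ j' i ≤ vtx v σ j i + 1 := by
  unfold vtx; split <;> split <;> omega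

/-- The labelled facet obtained by dropping vertex `d` is "rainbow": every color occurs
with a `true` flag among the remaining vertices. -/
def Rainbow (L : (Fin (m+1) → ℕ) → Fin (m+1) × Bool)
    (v : Fin (m+1) → Fin (k+1)) (σ : Equiv.Perm (Fin (m+1))) (d : Fin (m+2)) : Prop :=
  ∀ i : Fin (m+1), ∃ j : Fin (m+2), j ≠ d ∧ L (vtx v σ j) = (i, true)

lemma rainbow_unique {L : (Fin (m+1) → ℕ) → Fin (m+1) × Bool}
    {v : Fin (m+1) → Fin (k+1)} {σ : Equiv.Perm (Fin (m+1))} {d : Fin (m+2)}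
    (hR : Rainbow L v σ d) {j j' : Fin (m+2)} {i : Fin (m+1)}
    (hj : j ≠ d) (hj' : j' ≠ d) (h1 : L (vtx v σ j) = (i, true))
    (h2 : L (vtx v σ j') = (i, true)) : j = j' := by
  classical
  -- the choice function for the rainbow
  let w : Fin (m+1) → {j : Fin (m+2) // j ≠ d} :=
    fun i => ⟨(hR i).choose, (hR i).choose_spec.1⟩
  have hw : ∀ i, L (vtx v σ ((w i) : Fin (m+2))) = (i, true) := fun i => (hR i).choose_spec.2
  have hinj : Function.Injective w := by
    intro i₁ i₂ h
    have := hw i₁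
    rw [h, hw i₂] at this
    exact (Prod.mk.injEq .. ▸ this).1.symm
  have hcard : Fintype.card (Fin (m+1)) = Fintype.card {j : Fin (m+2) // j ≠ d} := by
    rw [Fintype.card_fin]
    have : Fintype.card {j : Fin (m+2) // ¬ j = d} = Fintype.card (Fin (m+2)) -
        Fintype.card {j : Fin (m+2) // j = d} := Fintype.card_subtype_compl _
    simp only [Fintype.card_subtype_eq, Fintype.card_fin] at this
    simpa using this.symm
  have hsurj : Function.Surjective w :=
    ((Fintype.bijective_iff_injective_and_card w).2 ⟨hinj, hcard⟩).2
  obtain ⟨i₁, hi₁⟩ := hsurj ⟨j, hj⟩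
  obtain ⟨i₂, hi₂⟩ := hsurj ⟨j', hj'⟩
  have e1 : L (vtx v σ j) = (i₁, true) := by rw [← hw i₁, hi₁]
  have e2 : L (vtx v σ j') = (i₂, true) := by rw [← hw i₂, hi₂]
  rw [h1] at e1; rw [h2] at e2
  have : i₁ = i ∧ i₂ = i := ⟨(Prod.mk.injEq .. ▸ e1.symm).1, (Prod.mk.injEq .. ▸ e2.symm).1⟩
  have : w i₁ = w i₂ := by rw [this.1, this.2]
  rw [hi₁, hi₂] at this
  exact congrArg Subtype.val this


lemma vtx_up (v : Fin (m+1) → Fin (k+1)) (σ : Equiv.Perm (Fin (m+1)))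
    (hb : (v (σ 0) : ℕ) + 1 < k + 1) (j : Fin (m+2)) (hj : (j : ℕ) < m + 1) :
    vtx (Function.update v (σ 0) ⟨(v (σ 0) : ℕ) + 1, hb⟩) ((finRotate (m+1)).trans σ) j
      = vtx v σ ⟨(j : ℕ) + 1, by omega⟩ := by
  funext i
  have hsymm : ∀ x, ((finRotate (m+1)).trans σ).symm x = (finRotate (m+1)).symm (σ.symm x) :=
    fun _ => rfl
  by_cases hi : i = σ 0
  · subst hi
    have h0 : σ.symm (σ 0) = 0 := Equiv.symm_apply_apply σ 0
    have hlast : (finRotate (m+1)).symm 0 = Fin.last m := by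
      rw [← finRotate_last, Equiv.symm_apply_apply]
    simp only [vtx, hsymm, h0, hlast, Function.update_self, Fin.val_last]
    rw [if_neg (by omega), if_pos (by simp)]
  · have hs0 : σ.symm i ≠ 0 := by
      intro h
      exact hi (by rw [← Equiv.apply_symm_apply σ i, h])
    have hupdate : Function.update v (σ 0) ⟨(v (σ 0) : ℕ) + 1, hb⟩ i = v i :=
      Function.update_of_ne hi _ _
    set s := σ.symm i with hs
    set s' := (finRotate (m+1)).symm s with hs'
    have happ : finRotate (m+1) s' = s := Equiv.apply_symm_apply _ _
    rw [finRotate_succ_apply] at happ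
    have hlast : s' ≠ Fin.last m := by
      intro h; rw [h, Fin.last_add_one] at happ; exact hs0 happ.symm
    have hval : (s' : ℕ) + 1 = (s : ℕ) := by
      have h2 := Fin.val_add_one s'
      rw [if_neg hlast] at h2
      rw [← happ, h2]
    simp only [vtx, hsymm, hupdate, ← hs, ← hs']
    congr 1
    split <;> split <;> omega

lemma vtx_swap (v : Fin (m+1) → Fin (k+1)) (σ : Equiv.Perm (Fin (m+1)))
    (a b : Fin (m+1)) (hab : (a : ℕ) + 1 = (b : ℕ)) (j : Fin (m+2)) (hj : (j : ℕ) ≠ (b : ℕ)) :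
    vtx v ((Equiv.swap a b).trans σ) j = vtx v σ j := by
  funext i
  have hsymm : ((Equiv.swap a b).trans σ).symm i = Equiv.swap a b (σ.symm i) := by
    rw [Equiv.symm_trans_apply, Equiv.symm_swap]
  unfold vtx
  rw [hsymm]
  congr 1
  rcases eq_or_ne (σ.symm i) a with h | h
  · rw [h, Equiv.swap_apply_left]
    split <;> split <;> omega
  · rcases eq_or_ne (σ.symm i) b with h2 | h2
    · rw [h2, Equiv.swap_apply_right]
      split <;> split <;> omega
    · rw [Equiv.swap_apply_of_ne_of_ne h h2]

/-- Boundary pairs: dropped-vertex/facet combinations lying on the outer boundary. -/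
def Bd (k : ℕ) {m : ℕ}
    (a : ((Fin (m+1) → Fin (k+1)) × Equiv.Perm (Fin (m+1))) × Fin (m+2)) : Prop :=
  ((a.2 : ℕ) = 0 ∧ (a.1.1 (a.1.2 0) : ℕ) = k) ∨
  ((a.2 : ℕ) = m + 1 ∧ (a.1.1 (a.1.2 (Fin.last m)) : ℕ) = 0)

/-- The simplex on the other side of the facet obtained by dropping vertex `a.2`. -/
def flp (a : ((Fin (m+1) → Fin (k+1)) × Equiv.Perm (Fin (m+1))) × Fin (m+2)) :
    ((Fin (m+1) → Fin (k+1)) × Equiv.Perm (Fin (m+1))) × Fin (m+2) :=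
  if (a.2 : ℕ) = 0 then
    ((Function.update a.1.1 (a.1.2 0) ⟨min ((a.1.1 (a.1.2 0) : ℕ) + 1) k, by omega⟩,
      (finRotate (m+1)).trans a.1.2), Fin.last (m+1))
  else if h : (a.2 : ℕ) = m + 1 then
    ((Function.update a.1.1 (a.1.2 (Fin.last m))
        ⟨(a.1.1 (a.1.2 (Fin.last m)) : ℕ) - 1, by
          have := (a.1.1 (a.1.2 (Fin.last m))).isLt; omega⟩,
      (finRotate (m+1)).symm.trans a.1.2), 0)
  else
    ((a.1.1, (Equiv.swap ⟨(a.2 : ℕ) - 1, by have := a.2.isLt; omega⟩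
        ⟨(a.2 : ℕ), by have := a.2.isLt; omega⟩).trans a.1.2), a.2)


variable {L : (Fin (m+1) → ℕ) → Fin (m+1) × Bool}

lemma flp_spec0 (v : Fin (m+1) → Fin (k+1)) (σ : Equiv.Perm (Fin (m+1))) (d : Fin (m+2))
    (h0 : (d : ℕ) = 0) (hbk : (v (σ 0) : ℕ) ≠ k) :
    flp ((v,σ),d) ≠ ((v,σ),d) ∧ ¬ Bd k (flp ((v,σ),d)) ∧ flp (flp ((v,σ),d)) = ((v,σ),d) ∧
      (Rainbow L v σ d →
        Rainbow L (flp ((v,σ),d)).1.1 (flp ((v,σ),d)).1.2 (flp ((v,σ),d)).2) := by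
  have hvlt := (v (σ 0)).isLt
  have hb : (v (σ 0) : ℕ) + 1 < k + 1 := by omega
  set v' : Fin (m+1) → Fin (k+1) := Function.update v (σ 0) ⟨(v (σ 0) : ℕ) + 1, hb⟩ with hv'
  set σ' : Equiv.Perm (Fin (m+1)) := (finRotate (m+1)).trans σ with hσ'
  have hmin : (⟨min ((v (σ 0) : ℕ) + 1) k, by omega⟩ : Fin (k+1))
      = (⟨(v (σ 0) : ℕ) + 1, hb⟩ : Fin (k+1)) := by
    have h : min ((v (σ 0) : ℕ) + 1) k = (v (σ 0) : ℕ) + 1 := by omega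
    exact Fin.ext h
  have hflip : flp ((v,σ),d) = ((v', σ'), Fin.last (m+1)) := by
    simp only [flp, h0, if_pos]
    rw [hmin]
  have he1 : σ' (Fin.last m) = σ 0 := by
    show σ (finRotate (m+1) (Fin.last m)) = σ 0
    rw [finRotate_last]
  have he2 : v' (σ 0) = ⟨(v (σ 0) : ℕ) + 1, hb⟩ := Function.update_self _ _ _
  have hupdv : ∀ (p : Fin (m+1)) (X : Fin (k+1)), p = σ 0 → (X : ℕ) = (v (σ 0) : ℕ) →
      Function.update v' p X = v := by
    intro p X hp hX
    have hXv : X = v (σ 0) := Fin.ext hX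
    rw [hp, hv', Function.update_idem, hXv, Function.update_eq_self]
  have hperm : (finRotate (m+1)).symm.trans σ' = σ := by
    rw [hσ', ← Equiv.trans_assoc, Equiv.symm_trans_self, Equiv.refl_trans]
  refine ⟨?_, ?_, ?_, ?_⟩
  · intro hEq
    rw [hflip] at hEq
    have := congrArg (fun x => ((x.2 : Fin (m+2)) : ℕ)) hEq
    simp only [Fin.val_last, h0] at this
    omega
  · rw [hflip]
    rintro (⟨hc, -⟩ | ⟨-, hc⟩)
    · simp at hc
    · simp only [he1, he2] at hc
      have : (v (σ 0) : ℕ) + 1 = 0 := hc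
      omega
  · rw [hflip]
    have hc1 : ¬ ((Fin.last (m+1) : Fin (m+2)) : ℕ) = 0 := by simp
    have hc2 : ((Fin.last (m+1) : Fin (m+2)) : ℕ) = m + 1 := by simp
    simp only [flp, if_neg hc1, dif_pos hc2]
    refine Prod.ext (Prod.ext ?_ ?_) ?_
    · show Function.update v' (σ' (Fin.last m)) _ = v
      refine hupdv _ _ he1 ?_
      show (v' (σ' (Fin.last m)) : ℕ) - 1 = (v (σ 0) : ℕ)
      rw [he1, he2]
      show (v (σ 0) : ℕ) + 1 - 1 = (v (σ 0) : ℕ)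
      omega
    · exact hperm
    · show (0 : Fin (m+2)) = d
      exact Fin.ext (by simp [h0])
  · intro hR i
    rw [hflip]
    obtain ⟨j, hjd, lab⟩ := hR i
    have hjv : (j : ℕ) ≠ 0 := by
      intro hh
      exact hjd (Fin.ext (by rw [hh, h0]))
    have hjlt := j.isLt
    refine ⟨⟨(j : ℕ) - 1, by omega⟩, ?_, ?_⟩
    · intro hh
      have := congrArg Fin.val hh
      simp only [Fin.val_last] at this
      omega
    · show L (vtx v' σ' ⟨(j : ℕ) - 1, by omega⟩) = (i, true)
      rw [vtx_up v σ hb ⟨(j : ℕ) - 1, by omega⟩ (by show (j : ℕ) - 1 < m + 1; omega)]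
      have hj1 : (j : ℕ) - 1 + 1 = (j : ℕ) := by omega
      have : (⟨(j : ℕ) - 1 + 1, by omega⟩ : Fin (m+2)) = j := Fin.ext hj1
      rw [this]
      exact lab

lemma flp_specL (v : Fin (m+1) → Fin (k+1)) (σ : Equiv.Perm (Fin (m+1))) (d : Fin (m+2))
    (hl : (d : ℕ) = m + 1) (hnz : (v (σ (Fin.last m)) : ℕ) ≠ 0) :
    flp ((v,σ),d) ≠ ((v,σ),d) ∧ ¬ Bd k (flp ((v,σ),d)) ∧ flp (flp ((v,σ),d)) = ((v,σ),d) ∧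
      (Rainbow L v σ d →
        Rainbow L (flp ((v,σ),d)).1.1 (flp ((v,σ),d)).1.2 (flp ((v,σ),d)).2) := by
  have hvlt := (v (σ (Fin.last m))).isLt
  have hw : (v (σ (Fin.last m)) : ℕ) - 1 < k + 1 := by omega
  set w : Fin (m+1) → Fin (k+1) :=
    Function.update v (σ (Fin.last m)) ⟨(v (σ (Fin.last m)) : ℕ) - 1, hw⟩ with hwdef
  set τ : Equiv.Perm (Fin (m+1)) := (finRotate (m+1)).symm.trans σ with hτdef
  have hflip : flp ((v,σ),d) = ((w, τ), 0) := by
    simp only [flp]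
    rw [if_neg (by omega), dif_pos hl]
  have hrot0 : (finRotate (m+1)).symm 0 = Fin.last m := by
    rw [← finRotate_last, Equiv.symm_apply_apply]
  have hτ0 : τ 0 = σ (Fin.last m) := by
    show σ ((finRotate (m+1)).symm 0) = _
    rw [hrot0]
  have hwτ0 : (w (τ 0) : ℕ) = (v (σ (Fin.last m)) : ℕ) - 1 := by
    rw [hτ0]
    show ((Function.update v (σ (Fin.last m)) _ (σ (Fin.last m))) : ℕ) = _
    rw [Function.update_self]
  have hb' : (w (τ 0) : ℕ) + 1 < k + 1 := by rw [hwτ0]; omega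
  have hupdv : ∀ X : Fin (k+1), (X : ℕ) = (v (σ (Fin.last m)) : ℕ) →
      Function.update w (τ 0) X = v := by
    intro X hX
    have hXv : X = v (σ (Fin.last m)) := Fin.ext hX
    rw [hτ0, hwdef, Function.update_idem, hXv, Function.update_eq_self]
  have hperm : (finRotate (m+1)).trans τ = σ := by
    rw [hτdef, ← Equiv.trans_assoc, Equiv.self_trans_symm, Equiv.refl_trans]
  have hveq : Function.update w (τ 0) ⟨(w (τ 0) : ℕ) + 1, hb'⟩ = v := by
    refine hupdv _ ?_
    show (w (τ 0) : ℕ) + 1 = _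
    rw [hwτ0]; omega
  have corr : ∀ (j : Fin (m+2)) (hj : (j : ℕ) < m + 1),
      vtx v σ j = vtx w τ ⟨(j : ℕ) + 1, by omega⟩ := by
    intro j hj
    exact (congrArg₂ (fun a b => vtx a b j) hveq hperm).symm.trans (vtx_up w τ hb' j hj)
  refine ⟨?_, ?_, ?_, ?_⟩
  · intro hEq
    rw [hflip] at hEq
    have := congrArg (fun x => ((x.2 : Fin (m+2)) : ℕ)) hEq
    simp only [hl] at this
    have h00 : ((0 : Fin (m+2)) : ℕ) = 0 := rfl
    rw [h00] at this
    omega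
  · rw [hflip]
    rintro (⟨-, hc⟩ | ⟨hc, -⟩)
    · rw [hwτ0] at hc
      omega
    · have h00 : ((0 : Fin (m+2)) : ℕ) = 0 := rfl
      rw [h00] at hc
      omega
  · rw [hflip]
    have hc1 : ((0 : Fin (m+2)) : ℕ) = 0 := rfl
    simp only [flp, hc1, if_pos]
    have hmin : (⟨min ((w (τ 0) : ℕ) + 1) k, by omega⟩ : Fin (k+1))
        = (⟨(w (τ 0) : ℕ) + 1, hb'⟩ : Fin (k+1)) := by
      have h : min ((w (τ 0) : ℕ) + 1) k = (w (τ 0) : ℕ) + 1 := by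
        rw [hwτ0]; omega
      exact Fin.ext h
    rw [hmin]
    refine Prod.ext (Prod.ext ?_ ?_) ?_
    · exact hveq
    · exact hperm
    · show Fin.last (m+1) = d
      exact Fin.ext (by simp [hl])
  · intro hR i
    rw [hflip]
    obtain ⟨j, hjd, lab⟩ := hR i
    have hjv : (j : ℕ) ≠ m + 1 := by
      intro hh
      exact hjd (Fin.ext (by rw [hh, hl]))
    have hjlt := j.isLt
    refine ⟨⟨(j : ℕ) + 1, by omega⟩, ?_, ?_⟩
    · intro hh
      have := congrArg Fin.val hh
      have h00 : ((0 : Fin (m+2)) : ℕ) = 0 := rfl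
      rw [h00] at this
      have h2 : (j : ℕ) + 1 = 0 := this
      omega
    · show L (vtx w τ ⟨(j : ℕ) + 1, by omega⟩) = (i, true)
      rw [← corr j (by omega)]
      exact lab

lemma flp_specM (v : Fin (m+1) → Fin (k+1)) (σ : Equiv.Perm (Fin (m+1))) (d : Fin (m+2))
    (h0 : ¬ (d : ℕ) = 0) (hl : ¬ (d : ℕ) = m + 1) :
    flp ((v,σ),d) ≠ ((v,σ),d) ∧ ¬ Bd k (flp ((v,σ),d)) ∧ flp (flp ((v,σ),d)) = ((v,σ),d) ∧
      (Rainbow L v σ d →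
        Rainbow L (flp ((v,σ),d)).1.1 (flp ((v,σ),d)).1.2 (flp ((v,σ),d)).2) := by
  have hdlt := d.isLt
  set A : Fin (m+1) := ⟨(d : ℕ) - 1, by omega⟩ with hA
  set B : Fin (m+1) := ⟨(d : ℕ), by omega⟩ with hB
  have hflip : flp ((v,σ),d) = ((v, (Equiv.swap A B).trans σ), d) := by
    simp only [flp]
    rw [if_neg h0, dif_neg hl]
  have hAB : (A : ℕ) + 1 = (B : ℕ) := by
    show (d : ℕ) - 1 + 1 = (d : ℕ); omega
  have hABne : A ≠ B := by
    intro hh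
    have := congrArg Fin.val hh
    omega
  refine ⟨?_, ?_, ?_, ?_⟩
  · intro hEq
    rw [hflip] at hEq
    have hperm : (Equiv.swap A B).trans σ = σ := congrArg (fun x => x.1.2) hEq
    have := congrArg (fun e => e A) hperm
    simp only [Equiv.trans_apply, Equiv.swap_apply_left] at this
    exact hABne (σ.injective this).symm
  · rw [hflip]
    rintro (⟨hc, -⟩ | ⟨hc, -⟩)
    · exact h0 hc
    · exact hl hc
  · rw [hflip]
    simp only [flp]
    rw [if_neg h0, dif_neg hl]
    refine Prod.ext (Prod.ext rfl ?_) rfl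
    show (Equiv.swap A B).trans ((Equiv.swap A B).trans σ) = σ
    refine Equiv.ext fun x => ?_
    simp [Equiv.trans_apply, Equiv.swap_apply_self]
  · intro hR i
    rw [hflip]
    obtain ⟨j, hjd, lab⟩ := hR i
    refine ⟨j, hjd, ?_⟩
    show L (vtx v ((Equiv.swap A B).trans σ) j) = (i, true)
    rw [vtx_swap v σ A B hAB j ?_]
    · exact lab
    · show (j : ℕ) ≠ (d : ℕ)
      intro hh
      exact hjd (Fin.ext hh)


lemma exists_min_zero (p : Fin (m+1) → ℕ) (hz : ∃ i, p i = 0) :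
    ∃ i₀, p i₀ = 0 ∧ ∀ i, i < i₀ → p i ≠ 0 := by
  classical
  set S : Finset (Fin (m+1)) := Finset.univ.filter (fun i => p i = 0) with hS
  have hne : S.Nonempty := by
    obtain ⟨i, hi⟩ := hz
    exact ⟨i, by simp [hS, hi]⟩
  refine ⟨S.min' hne, ?_, ?_⟩
  · have := S.min'_mem hne
    simp [hS] at this
    exact this
  · intro i hi hpi
    have : S.min' hne ≤ i := S.min'_le i (by simp [hS, hpi])
    exact absurd hi (not_lt.mpr this)

section WithL

variable (hcol : ∀ (p : Fin (m+1) → ℕ) (i₀ : Fin (m+1)), p i₀ = 0 →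
      (∀ i, i < i₀ → p i ≠ 0) → L p = (i₀, true))
  (hupper : ∀ p : Fin (m+1) → ℕ, (∀ i, 1 ≤ p i) → ∀ i, p i = k + 1 → L p ≠ (i, true))

include hcol in
lemma label_of_zero (p : Fin (m+1) → ℕ) (hz : ∃ i, p i = 0) :
    ∃ i₀, L p = (i₀, true) ∧ p i₀ = 0 ∧ ∀ i, i < i₀ → p i ≠ 0 := by
  obtain ⟨i₀, h1, h2⟩ := exists_min_zero p hz
  exact ⟨i₀, hcol p i₀ h1 h2, h1, h2⟩

include hcol hupper in
lemma bd0_not_rainbow (v : Fin (m+1) → Fin (k+1)) (σ : Equiv.Perm (Fin (m+1))) (d : Fin (m+2))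
    (h0 : (d : ℕ) = 0) (hbk : (v (σ 0) : ℕ) = k) : ¬ Rainbow L v σ d := by
  intro hR
  obtain ⟨j, hjd, lab⟩ := hR (σ 0)
  have hjv : (j : ℕ) ≠ 0 := fun hh => hjd (Fin.ext (by rw [hh, h0]))
  set p := vtx v σ j with hp
  have hpσ0 : p (σ 0) = k + 1 := by
    show (v (σ 0) : ℕ) + (if ((σ.symm (σ 0) : ℕ) < (j : ℕ)) then 1 else 0) = k + 1
    rw [Equiv.symm_apply_apply]
    rw [if_pos (by simp only [Fin.val_zero]; omega)]
    omega
  by_cases hz : ∃ i, p i = 0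
  · obtain ⟨i₀, hlab, hzero, -⟩ := label_of_zero hcol p hz
    rw [lab] at hlab
    have : σ 0 = i₀ := (Prod.mk.injEq .. ▸ hlab).1
    rw [← this, hpσ0] at hzero
    omega
  · push_neg at hz
    exact hupper p (fun i => by have := hz i; omega) (σ 0) hpσ0 lab

include hcol in
lemma bdL_unique (v : Fin (m+1) → Fin (k+1)) (σ : Equiv.Perm (Fin (m+1))) (d : Fin (m+2))
    (hl : (d : ℕ) = m + 1) (hz0 : (v (σ (Fin.last m)) : ℕ) = 0)
    (hR : Rainbow L v σ d) :
    v = (fun _ => (0 : Fin (k+1))) ∧ σ = 1 ∧ d = Fin.last (m+1) := by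
  classical
  -- every facet vertex is in the collar
  have hcollar : ∀ t : Fin (m+1), vtx v σ t.castSucc (σ (Fin.last m)) = 0 := by
    intro t
    show (v (σ (Fin.last m)) : ℕ) + (if ((σ.symm (σ (Fin.last m)) : ℕ) < (t.castSucc : ℕ)) then 1 else 0) = 0
    rw [Equiv.symm_apply_apply]
    have : ¬ ((Fin.last m : ℕ) < (t.castSucc : ℕ)) := by
      have := t.isLt
      simp only [Fin.val_last, Fin.coe_castSucc]
      omega
    rw [if_neg this]
    omega
  have hzex : ∀ t : Fin (m+1), ∃ i, vtx v σ t.castSucc i = 0 :=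
    fun t => ⟨σ (Fin.last m), hcollar t⟩
  -- the labelling function on facet vertices
  set μ : Fin (m+1) → Fin (m+1) :=
    fun t => (label_of_zero hcol (vtx v σ t.castSucc) (hzex t)).choose with hμ
  have hμlab : ∀ t, L (vtx v σ t.castSucc) = (μ t, true) :=
    fun t => (label_of_zero hcol (vtx v σ t.castSucc) (hzex t)).choose_spec.1
  have hμzero : ∀ t, vtx v σ t.castSucc (μ t) = 0 :=
    fun t => (label_of_zero hcol (vtx v σ t.castSucc) (hzex t)).choose_spec.2.1
  have hμmin : ∀ t, ∀ i, i < μ t → vtx v σ t.castSucc i ≠ 0 :=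
    fun t => (label_of_zero hcol (vtx v σ t.castSucc) (hzex t)).choose_spec.2.2
  have hμsurj : Function.Surjective μ := by
    intro i
    obtain ⟨j, hjd, lab⟩ := hR i
    have hjlt : (j : ℕ) < m + 1 := by
      have := j.isLt
      have : (j : ℕ) ≠ m + 1 := fun hh => hjd (Fin.ext (by rw [hh, hl]))
      omega
    refine ⟨⟨(j : ℕ), hjlt⟩, ?_⟩
    have hcast : (⟨(j : ℕ), hjlt⟩ : Fin (m+1)).castSucc = j := Fin.ext rfl
    have := hμlab ⟨(j : ℕ), hjlt⟩
    rw [hcast, lab] at this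
    exact ((Prod.mk.injEq .. ▸ this).1).symm
  have hμinj : Function.Injective μ := Finite.injective_iff_surjective.mpr hμsurj
  have hμmono : ∀ t t' : Fin (m+1), t ≤ t' → μ t ≤ μ t' := by
    intro t t' htt
    by_contra hlt
    push_neg at hlt
    have hz' : vtx v σ t.castSucc (μ t') = 0 := by
      have h1 := (vtx_mono v σ (show (t.castSucc : ℕ) ≤ (t'.castSucc : ℕ) by
        simpa using htt) (μ t')).1
      have h2 := hμzero t'
      omega
    exact hμmin t (μ t') hlt hz'
  have hμid : ∀ t, μ t = t := by
    have key : ∀ N, ∀ t : Fin (m+1), (t : ℕ) = N → μ t = t := by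
      intro N
      induction N using Nat.strong_induction_on with
      | _ N IH =>
        intro t ht
        obtain ⟨u, hu⟩ := hμsurj t
        have hut : (t : ℕ) ≤ (u : ℕ) := by
          by_contra hc
          push_neg at hc
          have := IH (u : ℕ) (by omega) u rfl
          rw [this] at hu
          have : (u : ℕ) = (t : ℕ) := congrArg Fin.val hu
          omega
        have h1 : μ t ≤ μ u := hμmono t u (by exact hut)
        rw [hu] at h1
        have h2 : (t : ℕ) ≤ (μ t : ℕ) := by
          by_contra hc
          push_neg at hc
          have := IH (μ t : ℕ) (by omega) (μ t) rfl
          have := hμinj this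
          rw [← this] at hc
          omega
        exact Fin.ext (by have := h1; omega)
    exact fun t => key (t : ℕ) t rfl
  have hv0 : ∀ i, v i = (0 : Fin (k+1)) := by
    intro i
    have := hμzero i
    rw [hμid i] at this
    have hval : (v i : ℕ) + (if ((σ.symm i : ℕ) < (i.castSucc : ℕ)) then 1 else 0) = 0 := this
    refine Fin.ext ?_
    show (v i : ℕ) = 0
    split at hval <;> omega
  have hσge : ∀ t : Fin (m+1), (t : ℕ) ≤ (σ.symm t : ℕ) := by
    intro t
    have := hμzero t
    rw [hμid t] at this
    have hval : (v t : ℕ) + (if ((σ.symm t : ℕ) < (t.castSucc : ℕ)) then 1 else 0) = 0 := this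
    have : ¬ ((σ.symm t : ℕ) < (t.castSucc : ℕ)) := by
      intro hc
      rw [if_pos hc] at hval
      omega
    simpa using this
  have hσid : ∀ t : Fin (m+1), σ.symm t = t := by
    have hsum : ∑ t : Fin (m+1), ((σ.symm t : ℕ)) = ∑ t : Fin (m+1), (t : ℕ) :=
      Equiv.sum_comp σ.symm (fun t => (t : ℕ))
    by_contra hc
    push_neg at hc
    obtain ⟨t₀, ht₀⟩ := hc
    have hlt : (t₀ : ℕ) < (σ.symm t₀ : ℕ) := by
      have := hσge t₀
      rcases lt_or_eq_of_le this with h | h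
      · exact h
      · exact absurd (Fin.ext h.symm) ht₀
    have : ∑ t : Fin (m+1), (t : ℕ) < ∑ t : Fin (m+1), ((σ.symm t : ℕ)) :=
      Finset.sum_lt_sum (fun i _ => hσge i) ⟨t₀, Finset.mem_univ _, hlt⟩
    omega
  refine ⟨funext hv0, ?_, Fin.ext (by simp [hl])⟩
  refine Equiv.ext fun x => ?_
  have := hσid (σ x)
  rw [Equiv.symm_apply_apply] at this
  rw [Equiv.Perm.one_apply]
  exact this.symm

include hcol in
lemma canonical_rainbow :
    Rainbow L (fun _ => (0 : Fin (k+1))) 1 (Fin.last (m+1)) := by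
  intro i
  refine ⟨i.castSucc, ?_, ?_⟩
  · intro hh
    have := congrArg Fin.val hh
    simp only [Fin.coe_castSucc, Fin.val_last] at this
    have := i.isLt
    omega
  · apply hcol
    · show (0 : ℕ) + (if (((1 : Equiv.Perm (Fin (m+1))).symm i : ℕ) < (i.castSucc : ℕ)) then 1 else 0) = 0
      have : ((1 : Equiv.Perm (Fin (m+1))).symm i) = i := rfl
      rw [this]
      rw [if_neg (by simp)]
    · intro i' hi'
      show (0 : ℕ) + (if (((1 : Equiv.Perm (Fin (m+1))).symm i' : ℕ) < (i.castSucc : ℕ)) then 1 else 0) ≠ 0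
      have : ((1 : Equiv.Perm (Fin (m+1))).symm i') = i' := rfl
      rw [this]
      rw [if_pos (by simpa using hi')]
      omega

end WithL

theorem key (m k : ℕ) (L : (Fin (m+1) → ℕ) → Fin (m+1) × Bool)
    (hcol : ∀ (p : Fin (m+1) → ℕ) (i₀ : Fin (m+1)), p i₀ = 0 →
      (∀ i, i < i₀ → p i ≠ 0) → L p = (i₀, true))
    (hupper : ∀ p : Fin (m+1) → ℕ, (∀ i, 1 ≤ p i) → ∀ i, p i = k + 1 → L p ≠ (i, true)) :
    ∃ g h : Fin (m+1) → ℕ, (∀ i, g i ≤ h i ∧ h i ≤ g i + 1) ∧ (∀ i, h i ≤ k + 1) ∧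
      ∃ i, (L g = (i, true) ∧ L h = (i, false)) ∨ (L g = (i, false) ∧ L h = (i, true)) := by
  classical
  by_contra hcon
  have NC : ∀ (v : Fin (m+1) → Fin (k+1)) (σ : Equiv.Perm (Fin (m+1))) (j j' : Fin (m+2))
      (i : Fin (m+1)), L (vtx v σ j) = (i, true) → L (vtx v σ j') = (i, false) → False := by
    intro v σ j j' i h1 h2
    rcases le_or_gt (j : ℕ) (j' : ℕ) with hle | hlt
    · exact hcon ⟨vtx v σ j, vtx v σ j', fun i' => vtx_mono v σ hle i',
        fun i' => vtx_le v σ j' i', i, Or.inl ⟨h1, h2⟩⟩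
    · exact hcon ⟨vtx v σ j', vtx v σ j, fun i' => vtx_mono v σ (le_of_lt hlt) i',
        fun i' => vtx_le v σ j i', i, Or.inr ⟨h2, h1⟩⟩
  set F : Finset (((Fin (m+1) → Fin (k+1)) × Equiv.Perm (Fin (m+1))) × Fin (m+2)) :=
    Finset.univ.filter (fun a => Rainbow L a.1.1 a.1.2 a.2) with hF
  have hRa : ∀ a ∈ F, Rainbow L a.1.1 a.1.2 a.2 := fun a ha => (Finset.mem_filter.mp ha).2
  -- the label of the dropped vertex of a rainbow pair has flag `true`
  have hkey1 : ∀ a, a ∈ F →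
      L (vtx a.1.1 a.1.2 a.2) = ((L (vtx a.1.1 a.1.2 a.2)).1, true) := by
    intro a ha
    obtain ⟨j₀, hj₀, lab₀⟩ := hRa a ha ((L (vtx a.1.1 a.1.2 a.2)).1)
    cases hb : (L (vtx a.1.1 a.1.2 a.2)).2 with
    | false =>
      have hLp : L (vtx a.1.1 a.1.2 a.2) = ((L (vtx a.1.1 a.1.2 a.2)).1, false) := by
        rw [← hb]
      exact (NC a.1.1 a.1.2 j₀ a.2 _ lab₀ hLp).elim
    | true => rw [← hb]
  -- Part I : |F| is even (pair a rainbow (S,d) with (S,d') where d' is the other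
  -- vertex of S with the same label as the one dropped at d)
  have hFeven : (F.card : ZMod 2) = 0 := by
    have hsum : ∑ _x ∈ F, (1 : ZMod 2) = 0 := by
      refine Finset.sum_involution
        (fun a ha => (a.1, (hRa a ha ((L (vtx a.1.1 a.1.2 a.2)).1)).choose))
        (fun a ha => by decide) (fun a ha _ => ?_) (fun a ha => ?_) (fun a ha => ?_)
      · -- g a ha ≠ a
        intro hh
        have := congrArg Prod.snd hh
        exact (hRa a ha ((L (vtx a.1.1 a.1.2 a.2)).1)).choose_spec.1 this
      · -- g a ha ∈ F
        obtain ⟨hne, hlab⟩ := (hRa a ha ((L (vtx a.1.1 a.1.2 a.2)).1)).choose_spec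
        refine Finset.mem_filter.mpr ⟨Finset.mem_univ _, ?_⟩
        intro i
        by_cases hi : i = (L (vtx a.1.1 a.1.2 a.2)).1
        · exact ⟨a.2, Ne.symm hne, by rw [hi]; exact hkey1 a ha⟩
        · obtain ⟨j, hj, lab⟩ := hRa a ha i
          refine ⟨j, ?_, lab⟩
          intro hh
          rw [hh] at lab
          rw [lab] at hlab
          exact hi (Prod.mk.injEq .. ▸ hlab).1
      · -- involution
        obtain ⟨hne, hlab⟩ := (hRa a ha ((L (vtx a.1.1 a.1.2 a.2)).1)).choose_spec
        set j₀ := (hRa a ha ((L (vtx a.1.1 a.1.2 a.2)).1)).choose with hj₀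
        -- the inner choose
        have hmem' : ((a.1, j₀) :
            ((Fin (m+1) → Fin (k+1)) × Equiv.Perm (Fin (m+1))) × Fin (m+2)) ∈ F := by
          obtain ⟨hne', hlab'⟩ := (hRa a ha ((L (vtx a.1.1 a.1.2 a.2)).1)).choose_spec
          refine Finset.mem_filter.mpr ⟨Finset.mem_univ _, ?_⟩
          intro i
          by_cases hi : i = (L (vtx a.1.1 a.1.2 a.2)).1
          · exact ⟨a.2, Ne.symm hne', by rw [hi]; exact hkey1 a ha⟩
          · obtain ⟨j, hj, lab⟩ := hRa a ha i
            refine ⟨j, ?_, lab⟩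
            intro hh
            rw [hh] at lab
            rw [lab] at hlab'
            exact hi (Prod.mk.injEq .. ▸ hlab').1
        have hfst : (L (vtx (a.1, j₀).1.1 (a.1, j₀).1.2 (a.1, j₀).2)).1
            = (L (vtx a.1.1 a.1.2 a.2)).1 := by
          show (L (vtx a.1.1 a.1.2 j₀)).1 = _
          rw [hlab]
        obtain ⟨hne2, hlab2⟩ :=
          (hRa (a.1, j₀) hmem' ((L (vtx (a.1, j₀).1.1 (a.1, j₀).1.2 (a.1, j₀).2)).1)).choose_spec
        set j₁ := (hRa (a.1, j₀) hmem'
          ((L (vtx (a.1, j₀).1.1 (a.1, j₀).1.2 (a.1, j₀).2)).1)).choose with hj₁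
        rw [hfst] at hlab2
        have hj₁a2 : j₁ = a.2 := by
          by_contra hc
          have := rainbow_unique (hRa a ha) hc hne (show L (vtx a.1.1 a.1.2 j₁) = _ from hlab2)
            hlab
          exact hne2 (by rw [this])
        show ((a.1, j₁) : _) = a
        rw [hj₁a2]
    rw [Finset.sum_const, nsmul_eq_mul, mul_one] at hsum
    exact hsum
  -- Part II : the non-boundary rainbow pairs pair up by flipping across the facet
  have hF1even : ((F.filter (fun a => ¬ Bd k a)).card : ZMod 2) = 0 := by
    have hflp : ∀ a ∈ F.filter (fun a => ¬ Bd k a),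
        flp a ≠ a ∧ flp a ∈ F.filter (fun a => ¬ Bd k a) ∧ flp (flp a) = a := by
      intro a ha
      have hmem := Finset.mem_filter.mp ha
      have hR : Rainbow L a.1.1 a.1.2 a.2 := hRa a hmem.1
      have hnB : ¬ Bd k a := hmem.2
      obtain ⟨⟨v, σ⟩, d⟩ := a
      by_cases h0 : (d : ℕ) = 0
      · have hbk : (v (σ 0) : ℕ) ≠ k := fun hc => hnB (Or.inl ⟨h0, hc⟩)
        obtain ⟨hne, hnB', hinv, hrain⟩ := flp_spec0 (L := L) v σ d h0 hbk
        exact ⟨hne, Finset.mem_filter.mpr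
          ⟨Finset.mem_filter.mpr ⟨Finset.mem_univ _, hrain hR⟩, hnB'⟩, hinv⟩
      · by_cases hl : (d : ℕ) = m + 1
        · have hnz : (v (σ (Fin.last m)) : ℕ) ≠ 0 := fun hc => hnB (Or.inr ⟨hl, hc⟩)
          obtain ⟨hne, hnB', hinv, hrain⟩ := flp_specL (L := L) v σ d hl hnz
          exact ⟨hne, Finset.mem_filter.mpr
            ⟨Finset.mem_filter.mpr ⟨Finset.mem_univ _, hrain hR⟩, hnB'⟩, hinv⟩
        · obtain ⟨hne, hnB', hinv, hrain⟩ := flp_specM (L := L) v σ d h0 hl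
          exact ⟨hne, Finset.mem_filter.mpr
            ⟨Finset.mem_filter.mpr ⟨Finset.mem_univ _, hrain hR⟩, hnB'⟩, hinv⟩
    have hsum : ∑ _x ∈ F.filter (fun a => ¬ Bd k a), (1 : ZMod 2) = 0 := by
      refine Finset.sum_involution (fun a _ => flp a) (fun a ha => by decide)
        (fun a ha _ => (hflp a ha).1) (fun a ha => (hflp a ha).2.1)
        (fun a ha => (hflp a ha).2.2)
    rw [Finset.sum_const, nsmul_eq_mul, mul_one] at hsum
    exact hsum
  -- Part III : there is exactly one boundary rainbow pair
  have hF0 : F.filter (Bd k) =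
      {(((fun _ => (0 : Fin (k+1))), 1), Fin.last (m+1))} := by
    apply Finset.eq_singleton_iff_unique_mem.mpr
    constructor
    · refine Finset.mem_filter.mpr ⟨Finset.mem_filter.mpr
        ⟨Finset.mem_univ _, canonical_rainbow hcol⟩, ?_⟩
      right
      exact ⟨by simp, rfl⟩
    · intro a ha
      have hmem := Finset.mem_filter.mp ha
      have hR : Rainbow L a.1.1 a.1.2 a.2 := hRa a hmem.1
      have hB : Bd k a := hmem.2
      obtain ⟨⟨v, σ⟩, d⟩ := a
      rcases hB with ⟨h0, hbk⟩ | ⟨hl, hz⟩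
      · exact absurd hR (bd0_not_rainbow hcol hupper v σ d h0 hbk)
      · obtain ⟨hv, hσ, hd⟩ := bdL_unique hcol v σ d hl hz hR
        subst hv
        subst hσ
        subst hd
        rfl
  -- combine
  have hcard0 : (F.filter (Bd k)).card = 1 := by rw [hF0]; exact Finset.card_singleton _
  have hsplit := Finset.card_filter_add_card_filter_not (s := F) (Bd k)
  have hz2 : ((F.filter (Bd k)).card : ZMod 2)
      + ((F.filter (fun a => ¬ Bd k a)).card : ZMod 2) = (F.card : ZMod 2) := by
    exact_mod_cast congrArg (Nat.cast : ℕ → ZMod 2) hsplit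
  rw [hcard0, hF1even, hFeven] at hz2
  norm_num at hz2


lemma chainIn_refl {X : Type*} (dd : X → X → ℝ) (A : Set X) (r : ℝ) (x : X) (hx : x ∈ A) :
    ChainIn dd A r x x :=
  ⟨0, fun _ => x, fun _ => hx, rfl, rfl, fun i => i.elim0⟩

lemma chainIn_snoc {X : Type*} (dd : X → X → ℝ) (A : Set X) (r : ℝ) {x y z : X}
    (h : ChainIn dd A r x y) (hz : z ∈ A) (hyz : dd y z < r) : ChainIn dd A r x z := by
  obtain ⟨n, cc, hmem, h0, hlast, hstep⟩ := h
  set c' : Fin (n+2) → X := Fin.snoc cc z with hc'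
  have hcast : ∀ j : Fin (n+1), c' j.castSucc = cc j := fun j => Fin.snoc_castSucc ..
  have hlast' : c' (Fin.last (n+1)) = z := Fin.snoc_last ..
  refine ⟨n+1, c', ?_, ?_, ?_, ?_⟩
  · intro i
    refine Fin.lastCases ?_ ?_ i
    · rw [hlast']; exact hz
    · intro j; rw [hcast]; exact hmem j
  · rw [show (0 : Fin (n+2)) = Fin.castSucc 0 from rfl, hcast]; exact h0
  · exact hlast'
  · intro i
    refine Fin.lastCases ?_ ?_ i
    · rw [Fin.succ_last, hlast', hcast, hlast]
      exact hyz
    · intro j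
      rw [hcast, Fin.succ_castSucc, hcast]
      exact hstep j


open ENNReal in
theorem statement_2' {X : Type*} [MetricSpace X] (n : ℕ) (hn : 1 ≤ n) (D : ℝ → ℝ≥0∞)
    (hD : IsControlFunction (dist : X → X → ℝ) (n - 1) D)
    (r : ℝ) (hr : 0 < r) (k : ℕ)
    (f : (Fin n → Fin (k + 1)) → X) (hf : IsRCube (dist : X → X → ℝ) r f) :
    ∃ (a b : Fin n → Fin (k + 1)) (i : Fin n),
      (((a i : ℕ) : ℤ) - ((b i : ℕ) : ℤ)).natAbs = k ∧
      ENNReal.ofReal (dist (f a) (f b)) ≤ D (n * r) := by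
  classical
  obtain ⟨m, rfl⟩ : ∃ m, n = m + 1 := ⟨n - 1, by omega⟩
  by_contra hcon
  have hRpos : (0 : ℝ) < ((m+1 : ℕ) : ℝ) * r := by positivity
  obtain ⟨P, hPcov, hPleb, hPchain⟩ := hD (((m+1 : ℕ) : ℝ) * r) hRpos
  -- choose the colouring
  have hleb' : ∀ z : (Fin (m+1) → Fin (k+1)),
      ∃ i : Fin (m+1), {y | dist (f z) y < ((m+1 : ℕ) : ℝ) * r} ⊆ P i := fun z => hPleb (f z)
  choose c hc using hleb'
  have hfP : ∀ z, f z ∈ P (c z) := fun z => hc z (by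
    show dist (f z) (f z) < _
    rw [dist_self]; exact hRpos)
  -- distance bound along monotone lattice moves
  have hdist : ∀ x y : (Fin (m+1) → Fin (k+1)),
      (∀ j, (x j : ℕ) ≤ (y j : ℕ) ∧ (y j : ℕ) ≤ (x j : ℕ) + 1) →
      dist (f x) (f y) < ((m+1 : ℕ) : ℝ) * r := by
    intro x y hxy
    set z : ℕ → (Fin (m+1) → Fin (k+1)) := fun t j => if (j : ℕ) < t then y j else x j
      with hzdef
    have hz0 : z 0 = x := funext fun j => by simp [hzdef]
    have hzm : z (m+1) = y := funext fun j => by simp [hzdef, j.isLt]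
    have hstep : ∀ t, t < m + 1 → dist (f (z t)) (f (z (t+1))) < r := by
      intro t ht
      by_cases heq : x ⟨t, ht⟩ = y ⟨t, ht⟩
      · have hzz : z t = z (t+1) := by
          funext j
          simp only [hzdef]
          rcases lt_trichotomy (j : ℕ) t with hj | hj | hj
          · rw [if_pos hj, if_pos (by omega)]
          · rw [if_neg (by omega), if_pos (by omega)]
            have hjt : j = ⟨t, ht⟩ := Fin.ext hj
            rw [hjt, heq]
          · rw [if_neg (by omega), if_neg (by omega)]
        rw [hzz, dist_self]
        exact hr
      · have hxyt1 := (hxy ⟨t, ht⟩).1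
        have hxyt2 := (hxy ⟨t, ht⟩).2
        have hne : (x ⟨t, ht⟩ : ℕ) ≠ (y ⟨t, ht⟩ : ℕ) := fun hh => heq (Fin.ext hh)
        have hyv := (y ⟨t, ht⟩).isLt
        have hzt : z t ⟨t, ht⟩ = x ⟨t, ht⟩ := by simp [hzdef]
        have hlt : (z t ⟨t, ht⟩ : ℕ) < k := by rw [hzt]; omega
        have hupd : Function.update (z t) ⟨t, ht⟩ ⟨(z t ⟨t, ht⟩ : ℕ) + 1,
            Nat.succ_lt_succ hlt⟩ = z (t+1) := by
          funext j
          by_cases hj : j = (⟨t, ht⟩ : Fin (m+1))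
          · rw [hj, Function.update_self]
            have hjv : ((⟨t, ht⟩ : Fin (m+1)) : ℕ) = t := rfl
            have : z (t+1) ⟨t, ht⟩ = y ⟨t, ht⟩ := by simp [hzdef]
            rw [this]
            refine Fin.ext ?_
            show (z t ⟨t, ht⟩ : ℕ) + 1 = (y ⟨t, ht⟩ : ℕ)
            rw [hzt]; omega
          · rw [Function.update_of_ne hj]
            have hjv : (j : ℕ) ≠ t := fun hh => hj (Fin.ext hh)
            simp only [hzdef]
            rcases lt_trichotomy (j : ℕ) t with h' | h' | h'
            · rw [if_pos h', if_pos (by omega)]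
            · exact absurd h' hjv
            · rw [if_neg (by omega), if_neg (by omega)]
        have := hf (z t) ⟨t, ht⟩ hlt
        rwa [hupd] at this
    have h1 : dist (f x) (f y) = dist (f (z 0)) (f (z (m+1))) := by rw [hz0, hzm]
    have h2 : dist (f (z 0)) (f (z (m+1))) ≤
        ∑ t ∈ Finset.range (m+1), dist (f (z t)) (f (z (t+1))) :=
      dist_le_range_sum_dist (fun t => f (z t)) (m+1)
    have h3 : ∑ t ∈ Finset.range (m+1), dist (f (z t)) (f (z (t+1))) <
        ∑ _t ∈ Finset.range (m+1), r :=
      Finset.sum_lt_sum_of_nonempty ⟨0, by simp⟩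
        (fun t ht => hstep t (Finset.mem_range.mp ht))
    have h4 : ∑ _t ∈ Finset.range (m+1), r = ((m+1 : ℕ) : ℝ) * r := by
      rw [Finset.sum_const, Finset.card_range, nsmul_eq_mul]
    rw [h1]
    calc dist (f (z 0)) (f (z (m+1))) ≤ _ := h2
    _ < _ := h3
    _ = _ := h4
  -- the step relation and its components
  set Stp : (Fin (m+1) → Fin (k+1)) → (Fin (m+1) → Fin (k+1)) → Prop :=
    fun x y => ((∀ j, (x j : ℕ) ≤ (y j : ℕ) ∧ (y j : ℕ) ≤ (x j : ℕ) + 1) ∨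
      (∀ j, (y j : ℕ) ≤ (x j : ℕ) ∧ (x j : ℕ) ≤ (y j : ℕ) + 1)) ∧ c y = c x with hStp
  have hStpSymm : Symmetric Stp := by
    intro x y hxy
    exact ⟨hxy.1.symm, hxy.2.symm⟩
  have hConnColor : ∀ x y, Relation.ReflTransGen Stp x y → c y = c x := by
    intro x y hconn
    induction hconn with
    | refl => rfl
    | tail _ hbc ih => rw [hbc.2, ih]
  have hStpDist : ∀ x y, Stp x y → dist (f x) (f y) < ((m+1 : ℕ) : ℝ) * r := by
    intro x y hs
    rcases hs.1 with h | h
    · exact hdist x y h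
    · rw [dist_comm]; exact hdist y x h
  have hChain : ∀ x y, Relation.ReflTransGen Stp x y →
      ChainIn dist (P (c x)) (((m+1 : ℕ) : ℝ) * r) (f x) (f y) := by
    intro x y hconn
    induction hconn with
    | refl => exact chainIn_refl _ _ _ _ (hfP x)
    | @tail b y hxb hby ih =>
      refine chainIn_snoc _ _ _ ih ?_ (hStpDist b y hby)
      have h1 : c y = c x := by rw [hby.2, hConnColor x b hxb]
      rw [← h1]
      exact hfP y
  -- no colour class spans its own direction
  have hNoSpan : ∀ u w, Relation.ReflTransGen Stp u w → (u (c u) : ℕ) = 0 →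
      (w (c u) : ℕ) = k → False := by
    intro u w hcw h0 hk
    have hchain := hChain u w hcw
    have hwP : f w ∈ P (c u) := by
      rw [← hConnColor u w hcw]
      exact hfP w
    have hle := hPchain (c u) (f u) (hfP u) (f w) hwP hchain
    refine hcon ⟨u, w, c u, ?_, hle⟩
    rw [h0, hk]
    simp
  -- the label on the cube
  set Ttop : (Fin (m+1) → Fin (k+1)) → Prop :=
    fun x => ∃ w, Relation.ReflTransGen Stp x w ∧ (w (c x) : ℕ) = k with hTtop
  set lam : (Fin (m+1) → Fin (k+1)) → Fin (m+1) × Bool :=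
    fun x => (c x, if Ttop x then false else true) with hlam
  have hBClow : ∀ x i, (x i : ℕ) = 0 → lam x ≠ (i, false) := by
    intro x i h0 hEq
    have hc1 : c x = i := (Prod.mk.injEq .. ▸ hEq).1
    have hb : (if Ttop x then false else true) = false := (Prod.mk.injEq .. ▸ hEq).2
    have hT : Ttop x := by
      by_contra hT
      rw [if_neg hT] at hb
      exact Bool.noConfusion hb
    obtain ⟨w, hcw, hk⟩ := hT
    exact hNoSpan x w hcw (by rw [hc1]; exact h0) hk
  have hBChigh : ∀ x i, (x i : ℕ) = k → lam x ≠ (i, true) := by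
    intro x i hk hEq
    have hc1 : c x = i := (Prod.mk.injEq .. ▸ hEq).1
    have hb : (if Ttop x then false else true) = true := (Prod.mk.injEq .. ▸ hEq).2
    have hT : ¬ Ttop x := by
      intro hT
      rw [if_pos hT] at hb
      exact Bool.noConfusion hb
    exact hT ⟨x, Relation.ReflTransGen.refl, by rw [hc1]; exact hk⟩
  -- the label on the extended grid
  set L : (Fin (m+1) → ℕ) → Fin (m+1) × Bool := fun p =>
    if hz : ∃ i, p i = 0 then ((exists_min_zero p hz).choose, true)
    else lam (fun i => ⟨min (p i - 1) k, by omega⟩) with hLdef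
  have hLcol : ∀ (p : Fin (m+1) → ℕ) (i₀ : Fin (m+1)), p i₀ = 0 →
      (∀ i, i < i₀ → p i ≠ 0) → L p = (i₀, true) := by
    intro p i₀ h1 h2
    have hz : ∃ i, p i = 0 := ⟨i₀, h1⟩
    have hL : L p = ((exists_min_zero p hz).choose, true) := by
      rw [hLdef]
      exact dif_pos hz
    rw [hL]
    obtain ⟨hz0, hzmin⟩ := (exists_min_zero p hz).choose_spec
    rcases lt_trichotomy ((exists_min_zero p hz).choose) i₀ with hlt | heq | hgt
    · exact absurd hz0 (h2 _ hlt)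
    · rw [heq]
    · exact absurd h1 (hzmin i₀ hgt)
  have hLupper : ∀ p : Fin (m+1) → ℕ, (∀ i, 1 ≤ p i) → ∀ i, p i = k + 1 →
      L p ≠ (i, true) := by
    intro p hp i hpk
    have hz : ¬ ∃ i, p i = 0 := by
      push_neg
      intro i'
      have := hp i'
      omega
    have hL : L p = lam (fun i' => ⟨min (p i' - 1) k, by omega⟩) := by
      rw [hLdef]
      exact dif_neg hz
    rw [hL]
    refine hBChigh _ i ?_
    show min (p i - 1) k = k
    rw [hpk]
    simp
  -- apply the combinatorial key lemma
  obtain ⟨g, h, hmono, hbound, i, hcase⟩ := key m k L hLcol hLupper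
  -- a point with a `false` label is not in the collar
  have hfalse_orig : ∀ p : Fin (m+1) → ℕ, ∀ i', L p = (i', false) → ∀ j, 1 ≤ p j := by
    intro p i' hLp j
    by_contra hcol'
    have hz : ∃ i'', p i'' = 0 := ⟨j, by omega⟩
    have : L p = ((exists_min_zero p hz).choose, true) := by
      rw [hLdef]; exact dif_pos hz
    rw [hLp] at this
    exact Bool.noConfusion (Prod.mk.injEq .. ▸ this).2
  -- the cube point corresponding to a non-collar grid point
  have hcube : ∀ (p : Fin (m+1) → ℕ) (q : Fin (m+1) → Fin (k+1)), (∀ j, 1 ≤ p j) →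
      (∀ j, (q j : ℕ) = p j - 1) → L p = lam q := by
    intro p q h1 hq
    have hz : ¬ ∃ i'', p i'' = 0 := by
      push_neg
      intro i''
      have := h1 i''
      omega
    have hL : L p = lam (fun i' => ⟨min (p i' - 1) k, by omega⟩) := by
      rw [hLdef]; exact dif_neg hz
    rw [hL]
    congr 1
    funext j
    refine Fin.ext ?_
    show min (p j - 1) k = (q j : ℕ)
    have h2 := (q j).isLt
    have := hq j
    omega
  -- symmetric handling of the two orientations
  have main : ∀ gg hh : Fin (m+1) → ℕ, (∀ j, gg j ≤ hh j ∧ hh j ≤ gg j + 1) →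
      (∀ j, hh j ≤ k + 1) → (L gg = (i, true) ∧ L hh = (i, false)) ∨
      (L gg = (i, false) ∧ L hh = (i, true)) → False := by
    intro gg hh hmono' hbound' hcase'
    -- the false-labelled point is not in the collar
    have hffalse : (∀ j, 1 ≤ gg j) ∨ (∀ j, 1 ≤ hh j) := by
      rcases hcase' with ⟨-, h2⟩ | ⟨h1, -⟩
      · exact Or.inr (hfalse_orig hh i h2)
      · exact Or.inl (hfalse_orig gg i h1)
    -- in fact both are: gg ≤ hh so if gg ≥ 1 then ok; if hh ≥ 1 but gg has a zero…
    by_cases hgz : ∃ j, gg j = 0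
    · -- gg is in the collar; its label is (min-zero, true)
      obtain ⟨j₀, hj₀⟩ := hgz
      have hz : ∃ j, gg j = 0 := ⟨j₀, hj₀⟩
      have hLg : L gg = ((exists_min_zero gg hz).choose, true) := by
        rw [hLdef]; exact dif_pos hz
      -- so gg carries the true label, hence hh carries (i, false)
      have hgt : L gg = (i, true) ∧ L hh = (i, false) := by
        rcases hcase' with hh' | ⟨h1, -⟩
        · exact hh'
        · rw [hLg] at h1
          exact absurd (Prod.mk.injEq .. ▸ h1).2 Bool.noConfusion
      obtain ⟨hgt1, hhf⟩ := hgt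
      have hhh1 : ∀ j, 1 ≤ hh j := hfalse_orig hh i hhf
      -- i is the minimal zero of gg, so gg i = 0 and hh i = 1
      have hieq : (exists_min_zero gg hz).choose = i := by
        rw [hLg] at hgt1
        exact (Prod.mk.injEq .. ▸ hgt1).1
      have hggi : gg i = 0 := by
        rw [← hieq]
        exact (exists_min_zero gg hz).choose_spec.1
      have hhi : hh i = 1 := by
        have := hmono' i
        have := hhh1 i
        omega
      -- the cube point of hh has i-th coordinate 0 but label (i, false) : contradiction
      set yh : Fin (m+1) → Fin (k+1) := fun j => ⟨hh j - 1, by have := hbound' j; omega⟩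
        with hyh
      have hy := hcube hh yh hhh1 (fun j => rfl)
      rw [hhf] at hy
      exact hBClow yh i (by show hh i - 1 = 0; omega) hy.symm
    · -- both points are interior: transfer to the cube and connect
      push_neg at hgz
      have hgg1 : ∀ j, 1 ≤ gg j := fun j => by have := hgz j; omega
      have hhh1 : ∀ j, 1 ≤ hh j := fun j => by
        have := hgz j
        have := (hmono' j).1
        omega
      have hggb : ∀ j, gg j ≤ k + 1 := fun j => by
        have := (hmono' j).1
        have := hbound' j
        omega
      set xg : Fin (m+1) → Fin (k+1) := fun j => ⟨gg j - 1, by have := hggb j; omega⟩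
        with hxgdef
      set xh : Fin (m+1) → Fin (k+1) := fun j => ⟨hh j - 1, by have := hbound' j; omega⟩
        with hxhdef
      have hxg' : L gg = lam xg := hcube gg xg hgg1 (fun j => rfl)
      have hxh' : L hh = lam xh := hcube hh xh hhh1 (fun j => rfl)
      have hadj : ∀ j, (xg j : ℕ) ≤ (xh j : ℕ) ∧ (xh j : ℕ) ≤ (xg j : ℕ) + 1 := by
        intro j
        have h1 := (hmono' j).1
        have h2 := (hmono' j).2
        have := hgg1 j
        have := hhh1 j
        constructor
        · show gg j - 1 ≤ hh j - 1; omega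
        · show hh j - 1 ≤ gg j - 1 + 1; omega
      -- labels of the cube points
      rcases hcase' with ⟨h1, h2⟩ | ⟨h1, h2⟩
      · -- lam xg = (i,true), lam xh = (i,false)
        rw [hxg'] at h1
        rw [hxh'] at h2
        have hcxg : c xg = i := (Prod.mk.injEq .. ▸ h1).1
        have hcxh : c xh = i := (Prod.mk.injEq .. ▸ h2).1
        have hTg : ¬ Ttop xg := by
          intro hT
          have := (Prod.mk.injEq .. ▸ h1).2
          rw [if_pos hT] at this
          exact Bool.noConfusion this
        have hTh : Ttop xh := by
          by_contra hT
          have := (Prod.mk.injEq .. ▸ h2).2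
          rw [if_neg hT] at this
          exact Bool.noConfusion this
        obtain ⟨w, hcw, hwk⟩ := hTh
        refine hTg ⟨w, Relation.ReflTransGen.head ⟨Or.inl hadj, by rw [hcxh, hcxg]⟩ hcw, ?_⟩
        rw [hcxg, ← hcxh]
        exact hwk
      · -- lam xg = (i,false), lam xh = (i,true)
        rw [hxg'] at h1
        rw [hxh'] at h2
        have hcxg : c xg = i := (Prod.mk.injEq .. ▸ h1).1
        have hcxh : c xh = i := (Prod.mk.injEq .. ▸ h2).1
        have hTg : Ttop xg := by
          by_contra hT
          have := (Prod.mk.injEq .. ▸ h1).2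
          rw [if_neg hT] at this
          exact Bool.noConfusion this
        have hTh : ¬ Ttop xh := by
          intro hT
          have := (Prod.mk.injEq .. ▸ h2).2
          rw [if_pos hT] at this
          exact Bool.noConfusion this
        obtain ⟨w, hcw, hwk⟩ := hTg
        refine hTh ⟨w, Relation.ReflTransGen.head ⟨Or.inr hadj, by rw [hcxh, hcxg]⟩ hcw, ?_⟩
        rw [hcxh, ← hcxg]
        exact hwk
  exact main g h hmono hbound hcase

end St2Aux

/-- If `X` has an `(n-1)`-dimensional control function `D`, then every `r`-cube
`f : {0,1,…,k}ⁿ → X` has two points `a, b` whose `i`-th coordinates differ by `k` for some `i`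
with `dist (f a) (f b) ≤ D (n·r)`. -/
theorem statement_2 {X : Type*} [MetricSpace X] (n : ℕ) (hn : 1 ≤ n) (D : ℝ → ℝ≥0∞)
    (hD : IsControlFunction (dist : X → X → ℝ) (n - 1) D)
    (r : ℝ) (hr : 0 < r) (k : ℕ)
    (f : (Fin n → Fin (k + 1)) → X) (hf : IsRCube (dist : X → X → ℝ) r f) :
    ∃ (a b : Fin n → Fin (k + 1)) (i : Fin n),
      (((a i : ℕ) : ℤ) - ((b i : ℕ) : ℤ)).natAbs = k ∧
      ENNReal.ofReal (dist (f a) (f b)) ≤ D (n * r) :=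
  St2Aux.statement_2' n hn D hD r hr k f hf

end
end
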